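/- arXiv:2402.07683 — 10 statements merged into one kernel-verified Lean document; each statement's English description precedes it below -/
import Mathlib

section
/- Let d ≥ 1 and n_1,…,n_d ≥ 1. Let σ be an orientation of the grid Γ with vertex set V(Γ) = ∏_{i=1}^d {0,1,…,n_i} (two vertices adjacent iff they differ in exactly one coordinate), i.e., a function assigning to every ordered pair (v,w) of adjacent vertices a value σ(v,w) ∈ {0,1} with σ(v,w) = 1 − σ(w,v). Assume σ is a grid unique sink orientation. Let C be the hypercube whose vertices are families J = (J_{i,h}) with i ∈ {1,…,d}, h ∈ {1,…,n_i} and J_{i,h} ∈ {0,1}. For a cube vertex J and each i, define the color j_i := max({0} ∪ {h : J_{i,h} = 1}) and the secondary color j_i^* := max({0} ∪ {h ≠ j_i : J_{i,h} = 1}), and let v(J) := (j_1,…,j_d) ∈ V(Γ). Define an orientation O of C by: O(J)_{i,h} := σ(v(J), v(J)[i↦h]) XOR J_{i,h} if h < j_i; O(J)_{i,h} := σ(v(J), v(J)[i↦h]) if h > j_i; and O(J)_{i,h} := σ(v(J), v(J)[i↦j_i^*]) if h = j_i, where v[i↦h] denotes v with its i-th coordinate replaced by h. Then O is a unique sink orientation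 of the cube C: for every pair of cube vertices A ≤ B (componentwise), there is exactly one vertex X with A ≤ X ≤ B such that O(X)_{i,h} = 0 for every coordinate (i,h) with A_{i,h} ≠ B_{i,h}. -/
/-!
A subcube `[A, B]` corresponds to the subgrid `N` with
`N_i = {j_i(A)} ∪ {h > j_i(A) : the coordinate (i, h) is free in [A, B]}`.
If `X` is a sink of the subcube and `j_i(X) > j_i(A)`, the top coordinate `j_i(X)` of `X` is free,
and the xor rule at the free coordinates below it forces the secondary color of `X` to be `j_i(A)`;
hence no edge of `N` leaves `v(X)`, i.e. `v(X)` is the sink of `N`.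
Moreover `X` is determined by `v(X)`: below `j_i` its free entries are read off `σ`, at `j_i` it is
`1` and above `j_i` it is `0`. Conversely this lift of the sink of `N` is a sink of the subcube.
-/

/-- The color `j_i` of a cube vertex `J` in grid dimension `i`:
`max({0} ∪ {h : J_{i,h} = 1})`, where `k : Fin (n i)` encodes `h = k + 1`. -/
def gridColor {d : ℕ} {n : Fin d → ℕ} (J : ∀ i : Fin d, Fin (n i) → Bool)
    (i : Fin d) : ℕ :=
  (Finset.univ.filter fun k : Fin (n i) => J i k = true).sup fun k => (k : ℕ) + 1

/-- The secondary color `j_i^*` of a cube vertex `J` in grid dimension `i`: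
`max({0} ∪ {h ≠ j_i : J_{i,h} = 1})`. -/
def gridColor2 {d : ℕ} {n : Fin d → ℕ} (J : ∀ i : Fin d, Fin (n i) → Bool)
    (i : Fin d) : ℕ :=
  (Finset.univ.filter fun k : Fin (n i) =>
    J i k = true ∧ (k : ℕ) + 1 ≠ gridColor J i).sup fun k => (k : ℕ) + 1

/-- The grid vertex `v(J) = (j_1, …, j_d)` associated with a cube vertex `J`. -/
def gridVert {d : ℕ} {n : Fin d → ℕ} (J : ∀ i : Fin d, Fin (n i) → Bool)
    (i : Fin d) : Fin (n i + 1) :=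
  ⟨gridColor J i, Nat.lt_succ_of_le (Finset.sup_le fun k _ => k.isLt)⟩

/-- The cube orientation `O` constructed from a grid orientation `σ`:
`O(J)_{i,h} = σ(v(J), v(J)[i ↦ h]) XOR J_{i,h}` if `h < j_i`,
`O(J)_{i,h} = σ(v(J), v(J)[i ↦ h])` if `h > j_i`, and
`O(J)_{i,h} = σ(v(J), v(J)[i ↦ j_i^*])` if `h = j_i`,
where `k : Fin (n i)` encodes `h = k + 1` and `true` encodes an outgoing edge. -/
def cubeOrient {d : ℕ} {n : Fin d → ℕ}
    (σ : (∀ i : Fin d, Fin (n i + 1)) → (∀ i : Fin d, Fin (n i + 1)) → Bool)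
    (J : ∀ i : Fin d, Fin (n i) → Bool) (i : Fin d) (k : Fin (n i)) : Bool :=
  if (k : ℕ) + 1 < gridColor J i then
    Bool.xor
      (σ (gridVert J)
        (Function.update (gridVert J) i ⟨(k : ℕ) + 1, Nat.succ_lt_succ k.isLt⟩))
      (J i k)
  else if (k : ℕ) + 1 = gridColor J i then
    σ (gridVert J)
      (Function.update (gridVert J) i
        ⟨gridColor2 J i, Nat.lt_succ_of_le (Finset.sup_le fun k' _ => k'.isLt)⟩)
  else
    σ (gridVert J)
      (Function.update (gridVert J) i ⟨(k : ℕ) + 1, Nat.succ_lt_succ k.isLt⟩)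

/-- Two grid vertices are adjacent iff they differ in exactly one coordinate. -/
def GridAdj {d : ℕ} {n : Fin d → ℕ} (v w : ∀ i : Fin d, Fin (n i + 1)) : Prop :=
  ∃ i, v i ≠ w i ∧ ∀ j, j ≠ i → v j = w j

section GridColor

variable {d : ℕ} {n : Fin d → ℕ} (J : ∀ i : Fin d, Fin (n i) → Bool) {i : Fin d}

@[simp]
lemma val_gridVert : (gridVert J i : ℕ) = gridColor J i := rfl

lemma le_gridColor {k : Fin (n i)} (h : J i k = true) : (k : ℕ) + 1 ≤ gridColor J i :=
  Finset.le_sup (f := fun k : Fin (n i) => (k : ℕ) + 1) (by simpa using h)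

lemma gridColor_le {m : ℕ} (h : ∀ k : Fin (n i), J i k = true → (k : ℕ) + 1 ≤ m) :
    gridColor J i ≤ m :=
  Finset.sup_le fun k hk => h k (by simpa using hk)

lemma eq_false_of_gridColor_lt {k : Fin (n i)} (h : gridColor J i < (k : ℕ) + 1) :
    J i k = false :=
  Bool.eq_false_iff.2 fun hk => (le_gridColor J hk).not_gt h

lemma exists_succ_eq_gridColor (h : gridColor J i ≠ 0) :
    ∃ k : Fin (n i), (k : ℕ) + 1 = gridColor J i ∧ J i k = true := by
  have hne : (Finset.univ.filter fun k : Fin (n i) => J i k = true).Nonempty :=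
    Finset.nonempty_iff_ne_empty.2 fun he => h (by simp [gridColor, he])
  obtain ⟨k, hk, hsup⟩ := Finset.exists_mem_eq_sup _ hne fun k : Fin (n i) => (k : ℕ) + 1
  exact ⟨k, hsup.symm, by simpa using hk⟩

lemma eq_true_of_succ_eq_gridColor {k : Fin (n i)} (h : (k : ℕ) + 1 = gridColor J i) :
    J i k = true := by
  obtain ⟨k', hk', hJ⟩ := exists_succ_eq_gridColor J (i := i) (by omega)
  rwa [show k = k' from Fin.ext (by omega)]

lemma gridColor_mono {J' : ∀ i : Fin d, Fin (n i) → Bool}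
    (h : ∀ k, J i k = true → J' i k = true) : gridColor J i ≤ gridColor J' i :=
  gridColor_le J fun k hk => le_gridColor J' (h k hk)

lemma le_gridColor2 {k : Fin (n i)} (h : J i k = true) (hne : (k : ℕ) + 1 ≠ gridColor J i) :
    (k : ℕ) + 1 ≤ gridColor2 J i :=
  Finset.le_sup (f := fun k : Fin (n i) => (k : ℕ) + 1) (by simp [h, hne])

lemma gridColor2_le {m : ℕ}
    (h : ∀ k : Fin (n i), J i k = true → (k : ℕ) + 1 < gridColor J i → (k : ℕ) + 1 ≤ m) :
    gridColor2 J i ≤ m :=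
  Finset.sup_le fun k hk => by
    simp only [Finset.mem_filter, Finset.mem_univ, true_and] at hk
    exact h k hk.1 (lt_of_le_of_ne (le_gridColor J hk.1) hk.2)

lemma exists_succ_eq_gridColor2 (h : gridColor2 J i ≠ 0) :
    ∃ k : Fin (n i), (k : ℕ) + 1 = gridColor2 J i ∧ J i k = true ∧
      (k : ℕ) + 1 < gridColor J i := by
  have hne : (Finset.univ.filter fun k : Fin (n i) =>
      J i k = true ∧ (k : ℕ) + 1 ≠ gridColor J i).Nonempty :=
    Finset.nonempty_iff_ne_empty.2 fun he => h (by simp [gridColor2, he])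
  obtain ⟨k, hk, hsup⟩ := Finset.exists_mem_eq_sup _ hne fun k : Fin (n i) => (k : ℕ) + 1
  simp only [Finset.mem_filter, Finset.mem_univ, true_and] at hk
  exact ⟨k, hsup.symm, hk.1, lt_of_le_of_ne (le_gridColor J hk.1) hk.2⟩

lemma gridColor_le_gridColor2 {J' : ∀ i : Fin d, Fin (n i) → Bool}
    (h : ∀ k, J' i k = true → J i k = true) (hne : gridColor J' i ≠ gridColor J i) :
    gridColor J' i ≤ gridColor2 J i := by
  rcases Nat.eq_zero_or_pos (gridColor J' i) with h0 | hpos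
  · omega
  obtain ⟨k, hk, hJ'⟩ := exists_succ_eq_gridColor J' (i := i) (by omega)
  exact hk ▸ le_gridColor2 J (h k hJ') (hk ▸ hne)

end GridColor

section CubeOrient

variable {d : ℕ} {n : Fin d → ℕ}
  (σ : (∀ i : Fin d, Fin (n i + 1)) → (∀ i : Fin d, Fin (n i + 1)) → Bool)
  {J : ∀ i : Fin d, Fin (n i) → Bool} {v : ∀ i : Fin d, Fin (n i + 1)} {i : Fin d}
  {k : Fin (n i)}

lemma cubeOrient_eq_false_iff_of_lt (hv : gridVert J = v) (h : (k : ℕ) + 1 < v i) :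
    cubeOrient σ J i k = false ↔ J i k = σ v (Function.update v i k.succ) := by
  subst hv
  rw [val_gridVert] at h
  rw [cubeOrient, if_pos h, bne_eq_false_iff_eq, eq_comm]
  rfl

lemma cubeOrient_of_eq (hv : gridVert J = v) (h : (k : ℕ) + 1 = v i) {w : Fin (n i + 1)}
    (hw : (w : ℕ) = gridColor2 J i) :
    cubeOrient σ J i k = σ v (Function.update v i w) := by
  subst hv
  rw [val_gridVert] at h
  rw [cubeOrient, if_neg (by exact h.not_lt), if_pos h]
  congr
  exact hw.symm

lemma cubeOrient_of_gt (hv : gridVert J = v) (h : (v i : ℕ) < (k : ℕ) + 1) :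
    cubeOrient σ J i k = σ v (Function.update v i k.succ) := by
  subst hv
  rw [val_gridVert] at h
  rw [cubeOrient, if_neg (by exact h.not_gt), if_neg (by exact h.ne')]
  rfl

end CubeOrient

section Subcube

variable {d : ℕ} {n : Fin d → ℕ}
  (σ : (∀ i : Fin d, Fin (n i + 1)) → (∀ i : Fin d, Fin (n i + 1)) → Bool)
  (A B : ∀ i : Fin d, Fin (n i) → Bool)

def IsSubcubeSink (X : ∀ i : Fin d, Fin (n i) → Bool) : Prop :=
  (∀ (i : Fin d) (k : Fin (n i)), A i k ≤ X i k ∧ X i k ≤ B i k) ∧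
    ∀ (i : Fin d) (k : Fin (n i)), A i k ≠ B i k → cubeOrient σ X i k = false

def IsSubgridSink (N : ∀ i : Fin d, Finset (Fin (n i + 1)))
    (v : ∀ i : Fin d, Fin (n i + 1)) : Prop :=
  (∀ i, v i ∈ N i) ∧
    ∀ i : Fin d, ∀ h ∈ N i, h ≠ v i → σ v (Function.update v i h) = false

def subgrid (i : Fin d) : Finset (Fin (n i + 1)) :=
  Finset.univ.filter fun h => gridColor A i ≤ h ∧
    (gridColor A i < h → ∃ k : Fin (n i), A i k ≠ B i k ∧ k.succ = h)

def subcubeLift (v : ∀ i : Fin d, Fin (n i + 1)) (i : Fin d) (k : Fin (n i)) : Bool :=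
  if A i k = B i k then A i k
  else if (k : ℕ) + 1 < v i then σ v (Function.update v i k.succ)
  else decide ((k : ℕ) + 1 = v i)

variable {σ A B} {i : Fin d}

lemma mem_subgrid {h : Fin (n i + 1)} :
    h ∈ subgrid A B i ↔ gridColor A i ≤ h ∧
      (gridColor A i < h → ∃ k : Fin (n i), A i k ≠ B i k ∧ k.succ = h) := by
  simp [subgrid]

lemma gridVert_mem_subgrid : gridVert A i ∈ subgrid A B i :=
  mem_subgrid.2 ⟨le_rfl, fun h => absurd h (lt_irrefl _)⟩

lemma succ_mem_subgrid {k : Fin (n i)} (hk : A i k ≠ B i k) (h : gridColor A i < (k : ℕ) + 1) :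
    k.succ ∈ subgrid A B i :=
  mem_subgrid.2 ⟨h.le, fun _ => ⟨k, hk, rfl⟩⟩

variable (A) in
lemma ne_of_gridColor_lt {X : ∀ i : Fin d, Fin (n i) → Bool} {k : Fin (n i)}
    (hXB : X i k ≤ B i k) (hX : X i k = true) (h : gridColor A i < (k : ℕ) + 1) :
    A i k ≠ B i k := by
  intro hAB
  have := le_gridColor A (hAB ▸ Bool.le_iff_imp.1 hXB hX)
  omega

lemma subcubeLift_mem (hAB : ∀ i k, A i k ≤ B i k) (v : ∀ i : Fin d, Fin (n i + 1))
    (i : Fin d) (k : Fin (n i)) :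
    A i k ≤ subcubeLift σ A B v i k ∧ subcubeLift σ A B v i k ≤ B i k := by
  by_cases hfix : A i k = B i k
  · simp [subcubeLift, hfix]
  · obtain ⟨hA, hB⟩ := Bool.lt_iff.1 (lt_of_le_of_ne (hAB i k) hfix)
    simp [hA, hB]

lemma gridVert_subcubeLift (hAB : ∀ i k, A i k ≤ B i k) {v : ∀ i : Fin d, Fin (n i + 1)}
    (hv : ∀ i, v i ∈ subgrid A B i) : gridVert (subcubeLift σ A B v) = v := by
  funext i
  obtain ⟨hav, hfree⟩ := mem_subgrid.1 (hv i)
  refine Fin.ext (le_antisymm (gridColor_le _ fun k hk => ?_) ?_)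
  · unfold subcubeLift at hk
    split_ifs at hk with hfix hlt
    · exact (le_gridColor A hk).trans hav
    · exact hlt.le
    · exact (of_decide_eq_true hk).le
  · rcases hav.lt_or_eq with hlt | heq
    · obtain ⟨k, hk, hks⟩ := hfree hlt
      rw [← hks]
      exact le_gridColor _ (by simp [subcubeLift, hk, ← hks])
    · rcases Nat.eq_zero_or_pos (v i : ℕ) with h0 | hpos
      · omega
      obtain ⟨k, hk, hA⟩ := exists_succ_eq_gridColor A (i := i) (by omega)
      have hB : B i k = true := Bool.le_iff_imp.1 (hAB i k) hA
      rw [← heq, ← hk]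
      exact le_gridColor _ (by simp [subcubeLift, hA, hB])

lemma gridColor2_subcubeLift (hAB : ∀ i k, A i k ≤ B i k) {v : ∀ i : Fin d, Fin (n i + 1)}
    (hv : IsSubgridSink σ (subgrid A B) v) (h : gridColor A i < v i) :
    gridColor2 (subcubeLift σ A B v) i = gridColor A i := by
  have hcol : gridColor (subcubeLift σ A B v) i = v i := by
    rw [← val_gridVert, gridVert_subcubeLift hAB hv.1]
  refine le_antisymm (gridColor2_le _ fun k hk hlt => ?_)
    (gridColor_le_gridColor2 _ (fun k => Bool.le_iff_imp.1 (subcubeLift_mem hAB v i k).1)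
      (by omega))
  by_contra! hgt
  have hfree := ne_of_gridColor_lt A (subcubeLift_mem hAB v i k).2 hk hgt
  rw [hcol] at hlt
  have hne : k.succ ≠ v i := Fin.ne_of_val_ne (by rw [Fin.val_succ]; omega)
  simp only [subcubeLift, hfree, hlt, if_false, if_true,
    hv.2 i _ (succ_mem_subgrid hfree hgt) hne] at hk
  exact Bool.false_ne_true hk

lemma isSubcubeSink_subcubeLift (hAB : ∀ i k, A i k ≤ B i k)
    {v : ∀ i : Fin d, Fin (n i + 1)} (hv : IsSubgridSink σ (subgrid A B) v) :
    IsSubcubeSink σ A B (subcubeLift σ A B v) := by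
  have hvert := gridVert_subcubeLift (σ := σ) hAB hv.1
  refine ⟨subcubeLift_mem hAB v, fun i k hfree => ?_⟩
  have hav := (mem_subgrid.1 (hv.1 i)).1
  rcases lt_trichotomy ((k : ℕ) + 1) (v i) with hlt | heq | hgt
  · rw [cubeOrient_eq_false_iff_of_lt σ hvert hlt]
    simp [subcubeLift, hfree, hlt]
  · have hlt : gridColor A i < v i := by
      refine lt_of_le_of_ne hav fun he => hfree ?_
      have hA := eq_true_of_succ_eq_gridColor A (heq.trans he.symm)
      rw [hA, Bool.le_iff_imp.1 (hAB i k) hA]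
    rw [cubeOrient_of_eq σ hvert heq (w := gridVert A i)
      (by rw [val_gridVert, gridColor2_subcubeLift hAB hv hlt])]
    exact hv.2 i _ gridVert_mem_subgrid (Fin.ne_of_val_ne (by rw [val_gridVert]; omega))
  · rw [cubeOrient_of_gt σ hvert hgt]
    exact hv.2 i _ (succ_mem_subgrid hfree (by omega))
      (Fin.ne_of_val_ne (by rw [Fin.val_succ]; omega))

variable {X : ∀ i : Fin d, Fin (n i) → Bool}

lemma gridVert_mem_subgrid_of_bounds (hX : ∀ i k, A i k ≤ X i k ∧ X i k ≤ B i k) (i : Fin d) :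
    gridVert X i ∈ subgrid A B i := by
  refine mem_subgrid.2 ⟨gridColor_mono A fun k => Bool.le_iff_imp.1 (hX i k).1, fun hlt => ?_⟩
  rw [val_gridVert] at hlt
  obtain ⟨k, hk, hXk⟩ := exists_succ_eq_gridColor X (i := i) (by omega)
  exact ⟨k, ne_of_gridColor_lt A (hX i k).2 hXk (by omega), Fin.ext (by simp [hk])⟩

lemma gridColor2_eq_of_isSubcubeSink (hX : IsSubcubeSink σ A B X)
    (h : gridColor A i < gridColor X i) : gridColor2 X i = gridColor A i := by
  obtain ⟨ktop, htop, hXtop⟩ := exists_succ_eq_gridColor X (i := i) (by omega)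
  have hfree_top := ne_of_gridColor_lt A (hX.1 i ktop).2 hXtop (by omega)
  refine le_antisymm ?_
    (gridColor_le_gridColor2 X (fun k => Bool.le_iff_imp.1 (hX.1 i k).1) h.ne)
  by_contra! hgt
  obtain ⟨k, hk, hXk, hlt⟩ := exists_succ_eq_gridColor2 X (i := i) (by omega)
  have hfree := ne_of_gridColor_lt A (hX.1 i k).2 hXk (by omega)
  have hσk := (cubeOrient_eq_false_iff_of_lt σ rfl (by simpa using hlt)).1 (hX.2 i k hfree)
  have := cubeOrient_of_eq σ rfl (by simpa using htop) (w := k.succ) (by simpa using hk)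
  rw [hX.2 i ktop hfree_top, ← hσk, hXk] at this
  exact Bool.false_ne_true this

lemma isSubgridSink_gridVert (hX : IsSubcubeSink σ A B X) :
    IsSubgridSink σ (subgrid A B) (gridVert X) := by
  refine ⟨gridVert_mem_subgrid_of_bounds hX.1, fun i h hh hne => ?_⟩
  obtain ⟨hah, hfree⟩ := mem_subgrid.1 hh
  have hax := (mem_subgrid.1 (gridVert_mem_subgrid_of_bounds hX.1 i)).1
  rcases lt_or_gt_of_ne (Fin.val_ne_of_ne hne) with hlt | hgt
  · rw [val_gridVert] at hlt
    have hsecond := gridColor2_eq_of_isSubcubeSink hX (i := i) (by omega)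
    rcases hah.lt_or_eq with hah_lt | hah_eq
    · obtain ⟨k, hk, rfl⟩ := hfree hah_lt
      rw [← (cubeOrient_eq_false_iff_of_lt σ rfl hlt).1 (hX.2 i k hk), Bool.eq_false_iff]
      intro hXk
      rw [Fin.val_succ] at hlt hah_lt
      have := le_gridColor2 X hXk (by omega)
      omega
    · obtain ⟨ktop, htop, hXtop⟩ := exists_succ_eq_gridColor X (i := i) (by omega)
      rw [← cubeOrient_of_eq σ rfl (by simpa using htop) (w := h) (by omega)]
      exact hX.2 i ktop (ne_of_gridColor_lt A (hX.1 i ktop).2 hXtop (by omega))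
  · obtain ⟨k, hk, rfl⟩ := hfree (lt_of_le_of_lt hax hgt)
    rw [← cubeOrient_of_gt σ rfl hgt]
    exact hX.2 i k hk

lemma eq_subcubeLift_of_isSubcubeSink (hX : IsSubcubeSink σ A B X) :
    X = subcubeLift σ A B (gridVert X) := by
  funext i k
  by_cases hfix : A i k = B i k
  · simpa [subcubeLift, hfix] using le_antisymm (hfix ▸ (hX.1 i k).2) (hX.1 i k).1
  rcases lt_trichotomy ((k : ℕ) + 1) (gridColor X i) with hlt | heq | hgt
  · rw [(cubeOrient_eq_false_iff_of_lt σ rfl hlt).1 (hX.2 i k hfix)]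
    simp [subcubeLift, hfix, hlt]
  · simpa [subcubeLift, hfix, heq] using eq_true_of_succ_eq_gridColor X heq
  · simpa [subcubeLift, hfix, hgt.not_gt, hgt.ne'] using eq_false_of_gridColor_lt X hgt

end Subcube

theorem gridUSO_to_cubeUSO_general {d : ℕ} {n : Fin d → ℕ}
    (σ : (∀ i : Fin d, Fin (n i + 1)) → (∀ i : Fin d, Fin (n i + 1)) → Bool)
    (hUSO : ∀ N : ∀ i : Fin d, Finset (Fin (n i + 1)), (∀ i, (N i).Nonempty) →
      ∃! v : ∀ i : Fin d, Fin (n i + 1),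
        (∀ i, v i ∈ N i) ∧
        ∀ i : Fin d, ∀ h ∈ N i, h ≠ v i → σ v (Function.update v i h) = false) :
    ∀ A B : ∀ i : Fin d, Fin (n i) → Bool, (∀ i k, A i k ≤ B i k) →
      ∃! X : ∀ i : Fin d, Fin (n i) → Bool,
        (∀ (i : Fin d) (k : Fin (n i)), A i k ≤ X i k ∧ X i k ≤ B i k) ∧
        ∀ (i : Fin d) (k : Fin (n i)), A i k ≠ B i k →
          cubeOrient σ X i k = false := by
  intro A B hAB
  obtain ⟨v, hv, hv_unique⟩ := hUSO (subgrid A B) fun i => ⟨_, gridVert_mem_subgrid⟩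
  refine ⟨subcubeLift σ A B v, isSubcubeSink_subcubeLift hAB hv, fun X hX => ?_⟩
  rw [eq_subcubeLift_of_isSubcubeSink hX, hv_unique _ (isSubgridSink_gridVert hX)]

/-- If `σ` is a grid unique sink orientation (every induced subgrid
`N 1 × ⋯ × N d` has exactly one sink), then the constructed cube orientation is a
unique sink orientation: every subcube (given by `A ≤ B` componentwise) contains
exactly one vertex `X` whose edges inside the subcube are all incoming. -/
theorem gridUSO_to_cubeUSO {d : ℕ} (hd : 1 ≤ d) {n : Fin d → ℕ}
    (hn : ∀ i, 1 ≤ n i)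
    (σ : (∀ i : Fin d, Fin (n i + 1)) → (∀ i : Fin d, Fin (n i + 1)) → Bool)
    (hσ : ∀ v w, GridAdj v w → σ v w = !σ w v)
    (hUSO : ∀ N : ∀ i : Fin d, Finset (Fin (n i + 1)), (∀ i, (N i).Nonempty) →
      ∃! v : ∀ i : Fin d, Fin (n i + 1),
        (∀ i, v i ∈ N i) ∧
        ∀ i : Fin d, ∀ h ∈ N i, h ≠ v i → σ v (Function.update v i h) = false) :
    ∀ A B : ∀ i : Fin d, Fin (n i) → Bool, (∀ i k, A i k ≤ B i k) →
      ∃! X : ∀ i : Fin d, Fin (n i) → Bool,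
        (∀ (i : Fin d) (k : Fin (n i)), A i k ≤ X i k ∧ X i k ≤ B i k) ∧
        ∀ (i : Fin d) (k : Fin (n i)), A i k ≠ B i k →
          cubeOrient σ X i k = false :=
  gridUSO_to_cubeUSO_general σ hUSO
end

section
/- Let d ≥ 1 and n_1,…,n_d ≥ 1, and let σ be an orientation of the grid Γ with vertex set ∏_{i=1}^d {0,1,…,n_i}, i.e., σ(v,w) ∈ {0,1} for adjacent v,w with σ(v,w) = 1 − σ(w,v). Define the cube orientation O from σ as follows: cube vertices are families J = (J_{i,h})_{i∈{1,…,d}, h∈{1,…,n_i}} with J_{i,h} ∈ {0,1}; for a cube vertex J set j_i := max({0} ∪ {h : J_{i,h} = 1}), j_i^* := max({0} ∪ {h ≠ j_i : J_{i,h} = 1}), v(J) := (j_1,…,j_d); then O(J)_{i,h} := σ(v(J), v(J)[i↦h]) XOR J_{i,h} if h < j_i, O(J)_{i,h} := σ(v(J), v(J)[i↦h]) if h > j_i, and O(J)_{i,h} := σ(v(J), v(J)[i↦j_i^*]) if h = j_i. Suppose v* ∈ V(Γ) is a sink of σ, i.e., σ(v*, w) = 0 for every vertex w adjacent to v*. Then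 the cube vertex J* defined by J*_{i,h} = 1 iff h = v*_i is a sink of O, i.e., O(J*)_{i,h} = 0 for all i ∈ {1,…,d} and h ∈ {1,…,n_i}. -/
/-! At `J*` the grid vertex `v(J*)` is `v*`, the secondary colours `j_i^*` all vanish and `J*`
has no entry `1` below `v*_i`, so the `XOR` never flips anything. Hence every `O(J*)_{i,h}`
equals `σ(v*, v*[i ↦ h'])` with `h' = h` or, when `h = v*_i`, with `h' = 0`; in both cases
`h' ≠ v*_i`, so the sink condition at `v*` makes it `0`. -/

section

variable {d : ℕ} {n : Fin d → ℕ}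

def gridToCube (v : ∀ i : Fin d, Fin (n i + 1)) : ∀ i : Fin d, Fin (n i) → Bool :=
  fun i k => decide ((k : ℕ) + 1 = (v i : ℕ))

theorem gridColor_gridToCube (v : ∀ i : Fin d, Fin (n i + 1)) (i : Fin d) :
    gridColor (gridToCube v) i = v i := by
  unfold gridColor
  refine le_antisymm (Finset.sup_le fun k hk => ?_) ?_
  · simp only [gridToCube, Finset.mem_filter, decide_eq_true_eq] at hk
    exact hk.2.le
  · obtain h0 | hpos := Nat.eq_zero_or_pos (v i : ℕ)
    · simp [h0]
    · have hk : (v i : ℕ) - 1 < n i := by omega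
      have hmem : (⟨(v i : ℕ) - 1, hk⟩ : Fin (n i)) ∈
          Finset.univ.filter fun k : Fin (n i) => gridToCube v i k = true := by
        simp only [gridToCube, Finset.mem_filter, Finset.mem_univ, decide_eq_true_eq, true_and]
        omega
      have := Finset.le_sup (f := fun k : Fin (n i) => (k : ℕ) + 1) hmem
      simp only at this
      omega

theorem gridVert_gridToCube (v : ∀ i : Fin d, Fin (n i + 1)) :
    gridVert (gridToCube v) = v :=
  funext fun i => Fin.ext (gridColor_gridToCube v i)

theorem gridColor2_gridToCube (v : ∀ i : Fin d, Fin (n i + 1)) (i : Fin d) :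
    gridColor2 (gridToCube v) i = 0 := by
  rw [gridColor2, Finset.filter_false_of_mem, Finset.sup_empty]
  · rfl
  intro k _
  simp [gridToCube, gridColor_gridToCube]

theorem exists_cubeOrient_gridToCube_eq
    (σ : (∀ i : Fin d, Fin (n i + 1)) → (∀ i : Fin d, Fin (n i + 1)) → Bool)
    (v : ∀ i : Fin d, Fin (n i + 1)) (i : Fin d) (k : Fin (n i)) :
    ∃ h, h ≠ v i ∧ cubeOrient σ (gridToCube v) i k = σ v (Function.update v i h) := by
  unfold cubeOrient
  simp only [gridColor_gridToCube, gridVert_gridToCube, gridColor2_gridToCube]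
  split_ifs with hlt heq
  · refine ⟨⟨(k : ℕ) + 1, Nat.succ_lt_succ k.isLt⟩,
      fun h => hlt.ne (congrArg Fin.val h), ?_⟩
    simp [gridToCube, hlt.ne]
  · refine ⟨_, fun h => ?_, rfl⟩
    have := congrArg Fin.val h
    simp only at this
    omega
  · exact ⟨⟨(k : ℕ) + 1, Nat.succ_lt_succ k.isLt⟩,
      fun h => heq (congrArg Fin.val h), rfl⟩

end

theorem grid_sink_to_cube_sink_general {d : ℕ} {n : Fin d → ℕ}
    (σ : (∀ i : Fin d, Fin (n i + 1)) → (∀ i : Fin d, Fin (n i + 1)) → Bool)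
    (vstar : ∀ i : Fin d, Fin (n i + 1))
    (hsink : ∀ (i : Fin d) (h : Fin (n i + 1)), h ≠ vstar i →
      σ vstar (Function.update vstar i h) = false) :
    ∀ (i : Fin d) (k : Fin (n i)),
      cubeOrient σ (fun i' k' => decide ((k' : ℕ) + 1 = (vstar i' : ℕ))) i k =
        false := by
  intro i k
  obtain ⟨h, hne, heq⟩ := exists_cubeOrient_gridToCube_eq σ vstar i k
  exact heq.trans (hsink i h hne)

/-- If `v*` is a sink of the grid orientation `σ`, then the cube vertex `J*` with
`J*_{i,h} = 1` iff `h = v*_i` is a sink of the constructed cube orientation. -/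
theorem grid_sink_to_cube_sink {d : ℕ} (hd : 1 ≤ d) {n : Fin d → ℕ}
    (hn : ∀ i, 1 ≤ n i)
    (σ : (∀ i : Fin d, Fin (n i + 1)) → (∀ i : Fin d, Fin (n i + 1)) → Bool)
    (hσ : ∀ v w, GridAdj v w → σ v w = !σ w v)
    (vstar : ∀ i : Fin d, Fin (n i + 1))
    (hsink : ∀ (i : Fin d) (h : Fin (n i + 1)), h ≠ vstar i →
      σ vstar (Function.update vstar i h) = false) :
    ∀ (i : Fin d) (k : Fin (n i)),
      cubeOrient σ (fun i' k' => decide ((k' : ℕ) + 1 = (vstar i' : ℕ))) i k =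
        false :=
  grid_sink_to_cube_sink_general σ vstar hsink
end

section
/- Let n ≥ 1, let L, R be n×n real matrices and S ⊆ {1,…,n}. If for every q ∈ ℝ^n the Lin-Bellman system (L, R, q, S) has exactly one solution x ∈ ℝ^n, then the matrix R − I (where I is the n×n identity matrix) is invertible. -/
/-- A vector `x` is a solution of the Lin-Bellman system `(L, R, q, S)`:
for every `i`, `x i = max ((Lx + q) i) ((Rx) i)` if `i ∈ S` and
`x i = min ((Lx + q) i) ((Rx) i)` otherwise. -/
def LinBellmanSol {n : ℕ} (L R : Matrix (Fin n) (Fin n) ℝ) (q : Fin n → ℝ)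
    (S : Finset (Fin n)) (x : Fin n → ℝ) : Prop :=
  ∀ i : Fin n,
    x i = if i ∈ S then max ((L.mulVec x + q) i) (R.mulVec x i)
          else min ((L.mulVec x + q) i) (R.mulVec x i)

/-! If `R - I` is singular, pick `v ≠ 0` with `R v = v`. Then `Rx = x` at both `x = 0` and
`x = v`, so a single `q` that makes the `R`-branch win at `0` and at `v` in every row
turns both into solutions, contradicting uniqueness. -/

open Matrix

theorem exists_linBellmanSol_zero_and_fixedPoint {n : ℕ} (L R : Matrix (Fin n) (Fin n) ℝ)
    (S : Finset (Fin n)) {v : Fin n → ℝ} (hv : R *ᵥ v = v) :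
    ∃ q, LinBellmanSol L R q S 0 ∧ LinBellmanSol L R q S v := by
  refine ⟨fun i => if i ∈ S then min 0 (v i - (L *ᵥ v) i) else max 0 (v i - (L *ᵥ v) i),
    fun i => ?_, fun i => ?_⟩
  · by_cases hi : i ∈ S <;> simp [hi]
  · rw [hv]
    by_cases hi : i ∈ S
    · simp only [hi, if_true, Pi.add_apply]
      rw [max_eq_right (by linarith [min_le_right (0 : ℝ) (v i - (L *ᵥ v) i)])]
    · simp only [hi, if_false, Pi.add_apply]
      rw [min_eq_right (by linarith [le_max_right (0 : ℝ) (v i - (L *ᵥ v) i)])]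

theorem linBellman_unique_imp_isUnit_R_sub_one_general {n : ℕ}
    (L R : Matrix (Fin n) (Fin n) ℝ) (S : Finset (Fin n))
    (huniq : ∀ q : Fin n → ℝ, ∃! x : Fin n → ℝ, LinBellmanSol L R q S x) :
    IsUnit (R - (1 : Matrix (Fin n) (Fin n) ℝ)) := by
  by_contra hR
  rw [isUnit_iff_isUnit_det, isUnit_iff_ne_zero, not_ne_iff] at hR
  obtain ⟨v, hv0, hv⟩ := exists_mulVec_eq_zero_iff.2 hR
  rw [sub_mulVec, one_mulVec, sub_eq_zero] at hv
  obtain ⟨q, hsol0, hsolv⟩ := exists_linBellmanSol_zero_and_fixedPoint L R S hv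
  exact hv0 ((huniq q).unique hsolv hsol0)

/-- If for every `q` the Lin-Bellman system `(L, R, q, S)` has exactly one solution,
then `R - I` is invertible. -/
theorem linBellman_unique_imp_isUnit_R_sub_one {n : ℕ} (hn : 1 ≤ n)
    (L R : Matrix (Fin n) (Fin n) ℝ) (S : Finset (Fin n))
    (huniq : ∀ q : Fin n → ℝ, ∃! x : Fin n → ℝ, LinBellmanSol L R q S x) :
    IsUnit (R - (1 : Matrix (Fin n) (Fin n) ℝ)) :=
  linBellman_unique_imp_isUnit_R_sub_one_general L R S huniq
end

section
/- Let M be an n×n real P-matrix. Then for every q ∈ ℝ^n there exists exactly one vector z ∈ ℝ^n satisfying z_i = min((Mz + z + q)_i, 2z_i) for every i ∈ {1,…,n}; that is, the Lin-Bellman system (M + I, 2I, q, ∅) has a unique solution for every q. -/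
/-!
Since `min (a + z) (2 z) = min a z + z`, the system says exactly that `z` solves the linear
complementarity problem `LCP(q, M)`: `z ≥ 0`, `M z + q ≥ 0`, `z ⊥ M z + q`.

A P-matrix reverses the sign of no nonzero vector `x`: some `x i * (M x) i > 0`, for otherwise
`M + D` would be singular on the support of `x` for a nonnegative diagonal `D`, while adding a
nonnegative diagonal keeps all principal minors positive. By compactness of the unit sphere,
even `x i * (M x) i ≥ c ‖x‖²` for some `i`. Complementarity gives
`(z₁ - z₂) i * (M (z₁ - z₂)) i ≤ (z₁ - z₂) i * (q₂ - q₁) i`, so solutions depend Lipschitz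
continuously on `q` and are unique. Existence is by induction on `n`: fixing the last coordinate
at `t` and solving the leading subproblem, the last residual grows at least like `c t`, and the
intermediate value theorem yields a `t` where the last complementarity condition holds as well.
-/

/-- `M` is a P-matrix: every principal minor of `M` is positive. -/
def IsPMatrix {n : ℕ} (M : Matrix (Fin n) (Fin n) ℝ) : Prop :=
  ∀ s : Finset (Fin n), s.Nonempty →
    0 < (M.submatrix (Subtype.val : {i // i ∈ s} → Fin n)
          (Subtype.val : {i // i ∈ s} → Fin n)).det

open Function Finset

theorem sub_mul_sub_nonpos_of_min_eq_zero {R : Type*} [CommRing R] [LinearOrder R]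
    [IsStrictOrderedRing R] {a b a' b' : R} (h : min a b = 0) (h' : min a' b' = 0) :
    (b - b') * (a - a') ≤ 0 := by
  have hab : a * b = 0 := by rcases min_choice a b with hm | hm <;> rw [hm] at h <;> simp [h]
  have hab' : a' * b' = 0 := by
    rcases min_choice a' b' with hm | hm <;> rw [hm] at h' <;> simp [h']
  have ha : 0 ≤ a := h ▸ min_le_left a b
  have hb : 0 ≤ b := h ▸ min_le_right a b
  have ha' : 0 ≤ a' := h' ▸ min_le_left a' b'
  have hb' : 0 ≤ b' := h' ▸ min_le_right a' b'
  nlinarith [mul_nonneg ha hb', mul_nonneg ha' hb]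

namespace Matrix

variable {α β R : Type*} [DecidableEq α] [DecidableEq β]

section CommRing

variable [Fintype α] [CommRing R]

theorem det_updateRow_single_self (A : Matrix α α R) (i : α) :
    (A.updateRow i (Pi.single i 1)).det = (A.submatrix ((↑) : {j // j ≠ i} → α) (↑)).det := by
  rw [twoBlockTriangular_det _ (· ≠ i) fun a ha b hb => by
    rw [not_not.1 ha, updateRow_self, Pi.single_eq_of_ne hb]]
  have : Unique {a // ¬a ≠ i} := ⟨⟨⟨i, not_not.2 rfl⟩⟩, fun j => Subtype.ext (not_not.1 j.2)⟩
  rw [det_unique (A := toSquareBlockProp _ fun a => ¬a ≠ i)]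
  have hi : ((default : {a // ¬a ≠ i}) : α) = i := not_not.1 (default : {a // ¬a ≠ i}).2
  rw [toSquareBlockProp_def, toSquareBlockProp_def, of_apply, hi, updateRow_self,
    Pi.single_eq_same, mul_one]
  congr 1
  ext a b
  simp [updateRow_ne a.2]

theorem det_add_diagonal_single (A : Matrix α α R) (i : α) (t : R) :
    (A + diagonal (Pi.single i t)).det =
      A.det + t * (A.submatrix ((↑) : {j // j ≠ i} → α) (↑)).det := by
  have : A + diagonal (Pi.single i t) = A.updateRow i (A i + t • Pi.single i 1) := by
    ext a b
    rcases eq_or_ne a i with rfl | ha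
    · rcases eq_or_ne b a with rfl | hb
      · simp
      · simp [hb, hb.symm]
    · simp [diagonal_apply, ha]
  rw [this, det_updateRow_add, det_updateRow_smul, updateRow_eq_self, det_updateRow_single_self]

end CommRing

/-- Unlike `IsPMatrix`, this includes the empty principal minor (which is `1`), so that no
nonemptiness side conditions arise. -/
def HasPosPrincipalMinors (M : Matrix α α ℝ) : Prop :=
  ∀ s : Finset α, 0 < (M.submatrix ((↑) : s → α) (↑)).det

namespace HasPosPrincipalMinors

variable {M : Matrix α α ℝ}

theorem det_submatrix_pos [Fintype β] (hM : M.HasPosPrincipalMinors) {f : β → α}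
    (hf : Injective f) :
    0 < (M.submatrix f f).det := by
  let e : β ≃ (univ.image f : Finset α) :=
    (Equiv.ofInjective f hf).trans (Equiv.subtypeEquivRight fun a => by simp)
  have : M.submatrix f f = (M.submatrix ((↑) : univ.image f → α) (↑)).submatrix e e := rfl
  rw [this, det_submatrix_equiv_self]
  exact hM _

theorem submatrix (hM : M.HasPosPrincipalMinors) {f : β → α} (hf : Injective f) :
    (M.submatrix f f).HasPosPrincipalMinors := fun s => by
  simpa only [submatrix_submatrix] using hM.det_submatrix_pos (hf.comp Subtype.val_injective)

section Fintype

variable [Fintype α]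

theorem det_pos (hM : M.HasPosPrincipalMinors) : 0 < M.det := by
  simpa using hM.det_submatrix_pos injective_id

theorem det_add_diagonal_single_pos (hM : M.HasPosPrincipalMinors) {t : ℝ} (ht : 0 ≤ t)
    (i : α) : 0 < (M + diagonal (Pi.single i t)).det := by
  rw [det_add_diagonal_single]
  exact add_pos_of_pos_of_nonneg hM.det_pos
    (mul_nonneg ht (hM.det_submatrix_pos Subtype.val_injective).le)

end Fintype

theorem add_diagonal_single (hM : M.HasPosPrincipalMinors) {t : ℝ} (ht : 0 ≤ t) (i : α) :
    (M + diagonal (Pi.single i t)).HasPosPrincipalMinors := by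
  intro s
  have hsub : (M + diagonal (Pi.single i t)).submatrix ((↑) : s → α) (↑) =
      M.submatrix (↑) (↑) + diagonal (Pi.single i t ∘ (↑)) := by
    rw [← submatrix_diagonal _ _ Subtype.val_injective]; rfl
  rw [hsub]
  by_cases hi : i ∈ s
  · have : Pi.single i t ∘ ((↑) : s → α) = Pi.single ⟨i, hi⟩ t := by
      ext j; simp [Pi.single_apply, Subtype.ext_iff]
    rw [this]
    exact (hM.submatrix Subtype.val_injective).det_add_diagonal_single_pos ht _
  · have : Pi.single i t ∘ ((↑) : s → α) = 0 := by
      ext j; simp [ne_of_mem_of_not_mem j.2 hi]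
    rw [this, diagonal_zero', add_zero]
    exact hM s

variable [Fintype α]

theorem add_diagonal (hM : M.HasPosPrincipalMinors) {d : α → ℝ} (hd : 0 ≤ d) :
    (M + diagonal d).HasPosPrincipalMinors := by
  have hpartial (s : Finset α) :
      (M + ∑ i ∈ s, diagonal (Pi.single i (d i))).HasPosPrincipalMinors := by
    induction s using Finset.induction_on with
    | empty => simpa
    | insert i s hi ih =>
      rw [sum_insert hi, add_comm (diagonal _), ← add_assoc]
      exact ih.add_diagonal_single (hd i) i
  have hsum : diagonal d = ∑ i, diagonal (Pi.single i (d i)) := by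
    rw [← diagonalAddMonoidHom_apply, ← univ_sum_single d, map_sum]
    simp
  simpa [hsum] using hpartial univ

theorem exists_mul_mulVec_pos (hM : M.HasPosPrincipalMinors) {x : α → ℝ} (hx : x ≠ 0) :
    ∃ i, 0 < x i * (M *ᵥ x) i := by
  by_contra! h
  let y : {i // x i ≠ 0} → ℝ := fun i => x i
  have hy : y ≠ 0 := by
    obtain ⟨i, hi⟩ := Function.ne_iff.1 hx
    exact Function.ne_iff.2 ⟨⟨i, hi⟩, hi⟩
  have hMy (i : {i // x i ≠ 0}) : (M.submatrix (↑) (↑) *ᵥ y) i = (M *ᵥ x) i := by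
    rw [mulVec, dotProduct, mulVec, dotProduct,
      ← Fintype.sum_subtype_add_sum_subtype fun i => x i ≠ 0]
    have hzero : ∑ j : {j // ¬x j ≠ 0}, M i j * x j = 0 :=
      sum_eq_zero fun j _ => by rw [not_not.1 j.2, mul_zero]
    rw [hzero, add_zero]
    rfl
  -- on the support of `x`, `(M + diagonal d) *ᵥ x = 0` with `d ≥ 0`
  let d : {i // x i ≠ 0} → ℝ := fun i => -(M *ᵥ x) i / x i
  have hd : 0 ≤ d := fun i => by
    have hdi : d i = -(x i * (M *ᵥ x) i) / x i ^ 2 := by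
      have := i.2
      simp only [d]
      field_simp
    exact hdi ▸ div_nonneg (neg_nonneg.2 (h i)) (sq_nonneg _)
  have hker : (M.submatrix (↑) (↑) + diagonal d) *ᵥ y = 0 := by
    ext i
    rw [add_mulVec, Pi.add_apply, hMy, mulVec_diagonal]
    simp [d, y, i.2]
  exact ((hM.submatrix Subtype.val_injective).add_diagonal hd).det_pos.ne'
    (exists_mulVec_eq_zero_iff.1 ⟨y, hy, hker⟩)

theorem exists_pos_forall_exists_le_mul_mulVec (hM : M.HasPosPrincipalMinors) :
    ∃ c > 0, ∀ x : α → ℝ, x ≠ 0 → ∃ i, c * ‖x‖ ^ 2 ≤ x i * (M *ᵥ x) i := by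
  rcases isEmpty_or_nonempty α with hα | hα
  · exact ⟨1, one_pos, fun x hx => absurd (Subsingleton.elim x 0) hx⟩
  let f : (α → ℝ) → ℝ := fun x => univ.sup' univ_nonempty fun i => x i * (M *ᵥ x) i
  have hf : Continuous f := Continuous.finset_sup'_apply _ fun i _ => by fun_prop
  obtain ⟨x₀, hx₀, hmin⟩ := (isCompact_sphere (0 : α → ℝ) 1).exists_isMinOn
    (NormedSpace.sphere_nonempty.2 zero_le_one) hf.continuousOn
  have hpos : 0 < f x₀ := by
    obtain ⟨i, hi⟩ := hM.exists_mul_mulVec_pos (ne_zero_of_mem_unit_sphere ⟨x₀, hx₀⟩)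
    exact hi.trans_le (le_sup' (fun i => x₀ i * (M *ᵥ x₀) i) (mem_univ i))
  refine ⟨f x₀, hpos, fun x hx => ?_⟩
  have hx' : 0 < ‖x‖ := norm_pos_iff.2 hx
  obtain ⟨i, -, hi⟩ := exists_mem_eq_sup' univ_nonempty
    fun i => (‖x‖⁻¹ • x) i * (M *ᵥ ‖x‖⁻¹ • x) i
  refine ⟨i, ?_⟩
  have h1 : f x₀ ≤ (‖x‖⁻¹ • x) i * (M *ᵥ ‖x‖⁻¹ • x) i :=
    hi ▸ hmin (show ‖x‖⁻¹ • x ∈ Metric.sphere 0 1 by simp [norm_smul, hx'.ne'])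
  rw [mulVec_smul, Pi.smul_apply, Pi.smul_apply, smul_eq_mul, smul_eq_mul] at h1
  have hscale : ‖x‖⁻¹ * x i * (‖x‖⁻¹ * (M *ᵥ x) i) = x i * (M *ᵥ x) i / ‖x‖ ^ 2 := by
    field_simp
  rwa [hscale, le_div_iff₀ (by positivity)] at h1

end HasPosPrincipalMinors

variable [Fintype α]

/-- `z` solves the linear complementarity problem `LCP(q, M)`: `z ≥ 0`, `M z + q ≥ 0` and
`z ⬝ᵥ (M z + q) = 0`, written coordinatewise as `min ((M z + q) i) (z i) = 0`. -/
def IsLCPSolution (M : Matrix α α ℝ) (q z : α → ℝ) : Prop :=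
  ∀ i, min ((M *ᵥ z + q) i) (z i) = 0

namespace HasPosPrincipalMinors

variable {M : Matrix α α ℝ}

theorem exists_pos_lipschitz_isLCPSolution (hM : M.HasPosPrincipalMinors) :
    ∃ c > 0, ∀ {q₁ q₂ z₁ z₂ : α → ℝ}, M.IsLCPSolution q₁ z₁ → M.IsLCPSolution q₂ z₂ →
      c * ‖z₁ - z₂‖ ≤ ‖q₁ - q₂‖ := by
  obtain ⟨c, hc, hcM⟩ := hM.exists_pos_forall_exists_le_mul_mulVec
  refine ⟨c, hc, fun {q₁ q₂ z₁ z₂} h₁ h₂ => ?_⟩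
  rcases eq_or_ne z₁ z₂ with rfl | hne
  · simp
  obtain ⟨i, hi⟩ := hcM (z₁ - z₂) (sub_ne_zero.2 hne)
  have hx : 0 < ‖z₁ - z₂‖ := norm_pos_iff.2 (sub_ne_zero.2 hne)
  have hcompl := sub_mul_sub_nonpos_of_min_eq_zero (h₁ i) (h₂ i)
  have hzi : |z₁ i - z₂ i| ≤ ‖z₁ - z₂‖ := norm_le_pi_norm (z₁ - z₂) i
  have hqi : |q₁ i - q₂ i| ≤ ‖q₁ - q₂‖ := norm_le_pi_norm (q₁ - q₂) i
  have hsplit : (z₁ - z₂) i * (M *ᵥ (z₁ - z₂)) i =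
      (z₁ i - z₂ i) * ((M *ᵥ z₁ + q₁) i - (M *ᵥ z₂ + q₂) i) - (z₁ i - z₂ i) * (q₁ i - q₂ i) := by
    simp only [mulVec_sub, Pi.sub_apply, Pi.add_apply]
    ring
  have hbound : -((z₁ i - z₂ i) * (q₁ i - q₂ i)) ≤ ‖z₁ - z₂‖ * ‖q₁ - q₂‖ :=
    calc -((z₁ i - z₂ i) * (q₁ i - q₂ i)) ≤ |z₁ i - z₂ i| * |q₁ i - q₂ i| :=
          abs_mul (z₁ i - z₂ i) (q₁ i - q₂ i) ▸ neg_le_abs _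
      _ ≤ ‖z₁ - z₂‖ * ‖q₁ - q₂‖ := mul_le_mul hzi hqi (abs_nonneg _) hx.le
  have hquad : c * ‖z₁ - z₂‖ ^ 2 ≤ ‖z₁ - z₂‖ * ‖q₁ - q₂‖ := by linarith
  rw [sq, ← mul_assoc, mul_comm ‖z₁ - z₂‖] at hquad
  exact le_of_mul_le_mul_right hquad hx

theorem eq_of_isLCPSolution (hM : M.HasPosPrincipalMinors) {q z₁ z₂ : α → ℝ}
    (h₁ : M.IsLCPSolution q z₁) (h₂ : M.IsLCPSolution q z₂) : z₁ = z₂ := by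
  obtain ⟨c, hc, hlip⟩ := hM.exists_pos_lipschitz_isLCPSolution
  have := hlip h₁ h₂
  rw [sub_self, norm_zero] at this
  exact sub_eq_zero.1 (norm_le_zero_iff.1 (by nlinarith [norm_nonneg (z₁ - z₂)]))

end HasPosPrincipalMinors

theorem mulVec_snoc_castSucc {R : Type*} [NonUnitalNonAssocSemiring R] {n : ℕ}
    (M : Matrix (Fin (n + 1)) (Fin (n + 1)) R) (y : Fin n → R) (t : R) (j : Fin n) :
    (M *ᵥ Fin.snoc y t) j.castSucc =
      (M.submatrix Fin.castSucc Fin.castSucc *ᵥ y) j + M j.castSucc (Fin.last n) * t := by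
  simp [mulVec, dotProduct, Fin.sum_univ_castSucc]

theorem mul_sub_last_le_of_min_castSucc_eq_zero {n : ℕ} {M : Matrix (Fin (n + 1)) (Fin (n + 1)) ℝ}
    {c : ℝ} (hc : 0 < c) (hcM : ∀ x ≠ 0, ∃ i, c * ‖x‖ ^ 2 ≤ x i * (M *ᵥ x) i)
    {q z₁ z₂ : Fin (n + 1) → ℝ}
    (h₁ : ∀ j : Fin n, min ((M *ᵥ z₁ + q) j.castSucc) (z₁ j.castSucc) = 0)
    (h₂ : ∀ j : Fin n, min ((M *ᵥ z₂ + q) j.castSucc) (z₂ j.castSucc) = 0)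
    (hle : z₁ (Fin.last n) ≤ z₂ (Fin.last n)) :
    c * (z₂ (Fin.last n) - z₁ (Fin.last n)) ≤
      (M *ᵥ z₂ + q) (Fin.last n) - (M *ᵥ z₁ + q) (Fin.last n) := by
  rcases eq_or_ne z₂ z₁ with rfl | hne
  · simp
  have hMx : ∀ i, (M *ᵥ (z₂ - z₁)) i = (M *ᵥ z₂ + q) i - (M *ᵥ z₁ + q) i := fun i => by
    simp [mulVec_sub]
  have hx : 0 < ‖z₂ - z₁‖ := norm_pos_iff.2 (sub_ne_zero.2 hne)
  have hcx : 0 < c * ‖z₂ - z₁‖ ^ 2 := by positivity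
  obtain ⟨i, hi⟩ := hcM (z₂ - z₁) (sub_ne_zero.2 hne)
  rw [hMx, Pi.sub_apply] at hi
  induction i using Fin.lastCases with
  | cast j =>
    exact absurd (hi.trans (sub_mul_sub_nonpos_of_min_eq_zero (h₂ j) (h₁ j))) hcx.not_ge
  | last =>
    have hlast : |z₂ (Fin.last n) - z₁ (Fin.last n)| ≤ ‖z₂ - z₁‖ := norm_le_pi_norm (z₂ - z₁) _
    have hsq : (z₂ (Fin.last n) - z₁ (Fin.last n)) ^ 2 ≤ ‖z₂ - z₁‖ ^ 2 := by
      rw [← sq_abs]; exact pow_le_pow_left₀ (abs_nonneg _) hlast 2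
    have hpos : 0 < z₂ (Fin.last n) - z₁ (Fin.last n) := by
      rcases (sub_nonneg.2 hle).lt_or_eq with h | h
      · exact h
      · rw [← h, zero_mul] at hi; exact absurd hi hcx.not_ge
    nlinarith

namespace HasPosPrincipalMinors

theorem exists_isLCPSolution_of_submatrix {n : ℕ} {M : Matrix (Fin (n + 1)) (Fin (n + 1)) ℝ}
    (hM : M.HasPosPrincipalMinors)
    (hsub : ∀ q', ∃ z', (M.submatrix Fin.castSucc Fin.castSucc).IsLCPSolution q' z')
    (q : Fin (n + 1) → ℝ) : ∃ z, M.IsLCPSolution q z := by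
  choose φ hφ using hsub
  obtain ⟨c', hc', hlip⟩ :=
    (hM.submatrix (Fin.castSucc_injective n)).exists_pos_lipschitz_isLCPSolution
  have hφ_cont : Continuous φ := by
    refine (LipschitzWith.of_dist_le_mul (K := c'⁻¹.toNNReal) fun q₁ q₂ => ?_).continuous
    rw [dist_eq_norm, dist_eq_norm, Real.coe_toNNReal _ (by positivity), inv_mul_eq_div,
      le_div_iff₀' hc']
    exact hlip (hφ q₁) (hφ q₂)
  -- fix the last coordinate at `t` and solve for the others
  let Z (t : ℝ) : Fin (n + 1) → ℝ :=
    Fin.snoc (φ fun j => q j.castSucc + M j.castSucc (Fin.last n) * t) t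
  let g (t : ℝ) : ℝ := (M *ᵥ Z t + q) (Fin.last n)
  have hZ (t : ℝ) (j : Fin n) : min ((M *ᵥ Z t + q) j.castSucc) (Z t j.castSucc) = 0 := by
    simpa [Z, mulVec_snoc_castSucc, add_right_comm, add_assoc] using hφ _ j
  have hg : Continuous g := by
    have hZ_cont : Continuous Z := (hφ_cont.comp (by fun_prop)).finSnoc continuous_id
    exact (continuous_apply _).comp ((continuous_const.matrix_mulVec hZ_cont).add continuous_const)
  obtain ⟨c, hc, hcM⟩ := hM.exists_pos_forall_exists_le_mul_mulVec
  have hgrowth (t : ℝ) (ht : 0 ≤ t) : c * t ≤ g t - g 0 := by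
    simpa only [Z, g, Fin.snoc_last, sub_zero] using
      mul_sub_last_le_of_min_castSucc_eq_zero hc hcM (hZ 0) (hZ t) (by simpa [Z] using ht)
  obtain ⟨t₀, -, ht₀⟩ : ∃ t₀ ∈ Set.Icc 0 (|g 0| / c), min (g t₀) t₀ = 0 := by
    have hT : 0 ≤ |g 0| / c := by positivity
    refine intermediate_value_Icc hT (hg.min continuous_id).continuousOn ⟨min_le_right _ _, ?_⟩
    have := hgrowth _ hT
    rw [mul_div_cancel₀ _ hc.ne'] at this
    exact le_min (by linarith [neg_abs_le (g 0)]) hT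
  refine ⟨Z t₀, Fin.lastCases ?_ (hZ t₀)⟩
  simpa [Z, g] using ht₀

theorem existsUnique_isLCPSolution {n : ℕ} {M : Matrix (Fin n) (Fin n) ℝ}
    (hM : M.HasPosPrincipalMinors) (q : Fin n → ℝ) : ∃! z, M.IsLCPSolution q z := by
  refine existsUnique_of_exists_of_unique ?_ fun z₁ z₂ => hM.eq_of_isLCPSolution
  induction n with
  | zero => exact ⟨0, fun i => i.elim0⟩
  | succ n ih =>
    exact hM.exists_isLCPSolution_of_submatrix
      (fun q' => ih (hM.submatrix (Fin.castSucc_injective n)) q') q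

end HasPosPrincipalMinors

end Matrix

theorem IsPMatrix.hasPosPrincipalMinors {n : ℕ} {M : Matrix (Fin n) (Fin n) ℝ}
    (hM : IsPMatrix M) : M.HasPosPrincipalMinors := by
  intro s
  rcases s.eq_empty_or_nonempty with rfl | hs
  · simp
  · exact hM s hs

theorem eq_min_add_two_mul_iff {a z : ℝ} : z = min (a + z) (2 * z) ↔ min a z = 0 := by
  rw [two_mul, min_add_add_right]
  constructor <;> intro h <;> linarith

/-- If `M` is a P-matrix, then for every `q` there is exactly one `z` with
`z i = min ((Mz + z + q) i) (2 z i)` for all `i`; i.e. the Lin-Bellman system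
`(M + I, 2I, q, ∅)` has a unique solution for every `q`. -/
theorem pmatrix_linBellman_unique {n : ℕ}
    (M : Matrix (Fin n) (Fin n) ℝ) (hM : IsPMatrix M) :
    ∀ q : Fin n → ℝ, ∃! z : Fin n → ℝ,
      ∀ i : Fin n, z i = min ((M.mulVec z + z + q) i) (2 * z i) := by
  intro q
  refine (existsUnique_congr fun z => forall_congr' fun i => ?_).2
    (hM.hasPosPrincipalMinors.existsUnique_isLCPSolution q)
  have : (M.mulVec z + z + q) i = (M.mulVec z + q) i + z i := by
    simp only [Pi.add_apply]; ring
  rw [this]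
  exact eq_min_add_two_mul_iff
end

section
/- Let L, R be n×n real matrices, q ∈ ℝ^n and S ⊆ {1,…,n}. A vector x ∈ ℝ^n is a solution of the Lin-Bellman system (L, R, q, S) if and only if there exist vectors w, z ∈ ℝ^n with w ≥ 0 and z ≥ 0 componentwise, w_i·z_i = 0 for all i, and such that for every i ∈ S: x_i − w_i = (Lx + q)_i and x_i − z_i = (Rx)_i, while for every i ∉ S: x_i + w_i = (Lx + q)_i and x_i + z_i = (Rx)_i. -/
section

variable {α : Type*} [Ring α] [LinearOrder α] [IsStrictOrderedRing α] {a b x : α}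

theorem eq_max_iff_exists_slack :
    x = max a b ↔ ∃ w z : α, 0 ≤ w ∧ 0 ≤ z ∧ w * z = 0 ∧ x - w = a ∧ x - z = b := by
  constructor
  · rintro rfl
    refine ⟨max a b - a, max a b - b, sub_nonneg.2 (le_max_left a b),
      sub_nonneg.2 (le_max_right a b), ?_, sub_sub_cancel _ _, sub_sub_cancel _ _⟩
    rcases le_total a b with hab | hba
    · rw [max_eq_right hab, sub_self, mul_zero]
    · rw [max_eq_left hba, sub_self, zero_mul]
  · rintro ⟨w, z, hw, hz, hwz, rfl, rfl⟩
    rcases mul_eq_zero.1 hwz with rfl | rfl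
    · simpa using hz
    · simpa using hw

theorem eq_min_iff_exists_slack :
    x = min a b ↔ ∃ w z : α, 0 ≤ w ∧ 0 ≤ z ∧ w * z = 0 ∧ x + w = a ∧ x + z = b := by
  constructor
  · rintro rfl
    refine ⟨a - min a b, b - min a b, sub_nonneg.2 (min_le_left a b),
      sub_nonneg.2 (min_le_right a b), ?_, add_sub_cancel _ _, add_sub_cancel _ _⟩
    rcases le_total a b with hab | hba
    · rw [min_eq_left hab, sub_self, zero_mul]
    · rw [min_eq_right hba, sub_self, mul_zero]
  · rintro ⟨w, z, hw, hz, hwz, rfl, rfl⟩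
    rcases mul_eq_zero.1 hwz with rfl | rfl
    · simpa using hz
    · simpa using hw

end

/-- `x` solves the Lin-Bellman system `(L, R, q, S)` iff there exist nonnegative
slack vectors `w, z` with `w i * z i = 0` for all `i`, such that for `i ∈ S`:
`x i - w i = (Lx + q) i` and `x i - z i = (Rx) i`, and for `i ∉ S`:
`x i + w i = (Lx + q) i` and `x i + z i = (Rx) i`. -/
theorem linBellman_iff_slack {n : ℕ} (L R : Matrix (Fin n) (Fin n) ℝ)
    (q : Fin n → ℝ) (S : Finset (Fin n)) (x : Fin n → ℝ) :
    LinBellmanSol L R q S x ↔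
      ∃ w z : Fin n → ℝ,
        (∀ i, 0 ≤ w i) ∧ (∀ i, 0 ≤ z i) ∧ (∀ i, w i * z i = 0) ∧
        (∀ i ∈ S, x i - w i = (L.mulVec x + q) i ∧ x i - z i = R.mulVec x i) ∧
        (∀ i ∉ S, x i + w i = (L.mulVec x + q) i ∧ x i + z i = R.mulVec x i) := by
  constructor
  · intro hx
    have slack : ∀ i, ∃ w z : ℝ, 0 ≤ w ∧ 0 ≤ z ∧ w * z = 0 ∧
        (i ∈ S → x i - w = (L.mulVec x + q) i ∧ x i - z = R.mulVec x i) ∧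
        (i ∉ S → x i + w = (L.mulVec x + q) i ∧ x i + z = R.mulVec x i) := by
      intro i
      have hxi := hx i
      split_ifs at hxi with hi
      · obtain ⟨w, z, hw, hz, hwz, hL, hR⟩ := eq_max_iff_exists_slack.1 hxi
        exact ⟨w, z, hw, hz, hwz, fun _ => ⟨hL, hR⟩, fun hi' => absurd hi hi'⟩
      · obtain ⟨w, z, hw, hz, hwz, hL, hR⟩ := eq_min_iff_exists_slack.1 hxi
        exact ⟨w, z, hw, hz, hwz, fun hi' => absurd hi' hi, fun _ => ⟨hL, hR⟩⟩
    choose w z hw hz hwz hS hSc using slack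
    exact ⟨w, z, hw, hz, hwz, hS, hSc⟩
  · rintro ⟨w, z, hw, hz, hwz, hS, hSc⟩ i
    split_ifs with hi
    · exact eq_max_iff_exists_slack.2 ⟨w i, z i, hw i, hz i, hwz i, hS i hi⟩
    · exact eq_min_iff_exists_slack.2 ⟨w i, z i, hw i, hz i, hwz i, hSc i hi⟩
end

section
/- Let L, R be n×n real matrices, q ∈ ℝ^n and S ⊆ {1,…,n}. For an n×n matrix A let Â denote the matrix with Â_{ij} = A_{ij} if i ∈ S and Â_{ij} = −A_{ij} if i ∉ S. Assume Î − R̂ is invertible, and set M := (Î − L̂)(Î − R̂)^{-1} and q′ := −Îq. Then a vector x ∈ ℝ^n is a solution of the Lin-Bellman system (L, R, q, S) if and only if there exist vectors w, z ∈ ℝ^n such that (w, z) is a solution of LCP(M, q′) and, in addition, Îx = w + L̂x + Îq and Îx = z + R̂x. -/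
/-!
Put `w := Î (x - L x - q)` and `z := Î (x - R x) = (Î - R̂) x`. In a row `i ∈ S` the equation
`x_i = max(a, b)` says exactly that `x_i - a` and `x_i - b` are nonnegative with product zero;
in a row `i ∉ S` the equation `x_i = min(a, b)` says the same of `a - x_i` and `b - x_i`.
So `x` solves the Lin-Bellman system iff `w, z ≥ 0` and `w ⊙ z = 0`. The two side conditions
force these values of `w` and `z`, and for them `M z - Î q = (Î - L̂) x - Î q = w` holds
automatically, because `(Î - R̂)⁻¹` cancels against `z = (Î - R̂) x`.
-/

open scoped Matrix

/-- `(w, z)` is a solution of `LCP(M, q)`. -/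
def LCPSol {n : ℕ} (M : Matrix (Fin n) (Fin n) ℝ) (q : Fin n → ℝ)
    (w z : Fin n → ℝ) : Prop :=
  w = M.mulVec z + q ∧ (∀ i, 0 ≤ w i) ∧ (∀ i, 0 ≤ z i) ∧ w ⬝ᵥ z = 0

/-- `Â`: the matrix obtained from `A` by negating the rows with index not in `S`. -/
def hatMat {n : ℕ} (S : Finset (Fin n)) (A : Matrix (Fin n) (Fin n) ℝ) :
    Matrix (Fin n) (Fin n) ℝ :=
  Matrix.of fun i j => if i ∈ S then A i j else -A i j

section Complementarity

variable {α : Type*} [Ring α] [LinearOrder α] [IsStrictOrderedRing α]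

theorem eq_max_iff_complementarity (x a b : α) :
    x = max a b ↔ 0 ≤ x - a ∧ 0 ≤ x - b ∧ (x - a) * (x - b) = 0 := by
  simp only [sub_nonneg, mul_eq_zero, sub_eq_zero]
  constructor
  · rintro rfl
    exact ⟨le_max_left a b, le_max_right a b, max_choice a b⟩
  · rintro ⟨ha, hb, rfl | rfl⟩
    exacts [(max_eq_left hb).symm, (max_eq_right ha).symm]

theorem eq_min_iff_complementarity (x a b : α) :
    x = min a b ↔ 0 ≤ a - x ∧ 0 ≤ b - x ∧ (a - x) * (b - x) = 0 := by
  rw [← neg_inj, ← max_neg_neg, eq_max_iff_complementarity]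
  simp only [sub_neg_eq_add, neg_add_eq_sub]

end Complementarity

section Hat

variable {n : ℕ} (S : Finset (Fin n))

theorem hatMat_eq_hatMat_one_mul (A : Matrix (Fin n) (Fin n) ℝ) :
    hatMat S A = hatMat S 1 * A := by
  ext i j
  by_cases hi : i ∈ S <;> simp [hatMat, Matrix.mul_apply, Matrix.one_apply, hi]

theorem hatMat_mulVec_apply (A : Matrix (Fin n) (Fin n) ℝ) (v : Fin n → ℝ) (i : Fin n) :
    (hatMat S A *ᵥ v) i = if i ∈ S then (A *ᵥ v) i else -(A *ᵥ v) i := by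
  by_cases hi : i ∈ S <;> simp [hatMat, Matrix.mulVec, dotProduct, hi]

theorem linBellmanSol_iff_complementarity (L R : Matrix (Fin n) (Fin n) ℝ) (q x : Fin n → ℝ) :
    LinBellmanSol L R q S x ↔
      ∀ i, 0 ≤ (hatMat S 1 *ᵥ (x - (L *ᵥ x + q))) i ∧ 0 ≤ (hatMat S 1 *ᵥ (x - R *ᵥ x)) i ∧
        (hatMat S 1 *ᵥ (x - (L *ᵥ x + q))) i * (hatMat S 1 *ᵥ (x - R *ᵥ x)) i = 0 := by
  refine forall_congr' fun i => ?_
  by_cases hi : i ∈ S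
  · simp only [hatMat_mulVec_apply, Matrix.one_mulVec, Pi.sub_apply, if_pos hi]
    exact eq_max_iff_complementarity _ _ _
  · simp only [hatMat_mulVec_apply, Matrix.one_mulVec, Pi.sub_apply, if_neg hi, neg_sub]
    exact eq_min_iff_complementarity _ _ _

end Hat

theorem lcpSol_iff_complementarity {n : ℕ} {M : Matrix (Fin n) (Fin n) ℝ} {q w z : Fin n → ℝ}
    (h : w = M *ᵥ z + q) :
    LCPSol M q w z ↔ ∀ i, 0 ≤ w i ∧ 0 ≤ z i ∧ w i * z i = 0 := by
  simp only [LCPSol, h, true_and, forall_and]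
  refine and_congr_right fun hw => and_congr_right fun hz => ?_
  rw [← h] at hw ⊢
  simp only [dotProduct, Finset.sum_eq_zero_iff_of_nonneg fun i _ => mul_nonneg (hw i) (hz i),
    Finset.mem_univ, true_implies]

/-- Assume `Î - R̂` is invertible and set `M := (Î - L̂)(Î - R̂)⁻¹`, `q' := -Î q`.
Then `x` solves the Lin-Bellman system `(L, R, q, S)` iff there are `w, z` solving
`LCP(M, q')` with `Î x = w + L̂ x + Î q` and `Î x = z + R̂ x`. -/
theorem linBellman_iff_lcp_hat {n : ℕ} (L R : Matrix (Fin n) (Fin n) ℝ)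
    (q : Fin n → ℝ) (S : Finset (Fin n))
    (hinv : IsUnit (hatMat S 1 - hatMat S R)) (x : Fin n → ℝ) :
    LinBellmanSol L R q S x ↔
      ∃ w z : Fin n → ℝ,
        LCPSol ((hatMat S 1 - hatMat S L) * (hatMat S 1 - hatMat S R)⁻¹)
          (-(hatMat S 1).mulVec q) w z ∧
        (hatMat S 1).mulVec x = w + (hatMat S L).mulVec x + (hatMat S 1).mulVec q ∧
        (hatMat S 1).mulVec x = z + (hatMat S R).mulVec x := by
  have hdet := (Matrix.isUnit_iff_isUnit_det _).mp hinv
  have hlcp : hatMat S 1 *ᵥ x - (hatMat S L *ᵥ x + hatMat S 1 *ᵥ q) =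
      ((hatMat S 1 - hatMat S L) * (hatMat S 1 - hatMat S R)⁻¹) *ᵥ
        (hatMat S 1 *ᵥ x - hatMat S R *ᵥ x) + -(hatMat S 1 *ᵥ q) := by
    rw [← Matrix.sub_mulVec, Matrix.mulVec_mulVec, Matrix.nonsing_inv_mul_cancel_right _ _ hdet,
      Matrix.sub_mulVec]
    abel
  rw [linBellmanSol_iff_complementarity]
  simp only [Matrix.mulVec_sub, Matrix.mulVec_add, Matrix.mulVec_mulVec,
    ← hatMat_eq_hatMat_one_mul]
  rw [← lcpSol_iff_complementarity hlcp]
  constructor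
  · exact fun h => ⟨_, _, h, by abel, by abel⟩
  · rintro ⟨w, z, h, hw, hz⟩
    rw [add_assoc] at hw
    rwa [eq_sub_of_add_eq hw.symm, eq_sub_of_add_eq hz.symm] at h
end

section
/- Let n ≥ 1, let b_1,…,b_n ≥ 1 be integers, let M be a vertical block matrix with blocks M_1,…,M_n where M_i ∈ ℝ^{b_i × n} (so M ∈ ℝ^{N×n} with N = b_1 + ⋯ + b_n), and let q ∈ ℝ^N with blocks q_i ∈ ℝ^{b_i}. Then a vector z ∈ ℝ^n satisfies z_i = min( min_{1 ≤ j ≤ b_i} ((Mz + q)_i^j + z_i), 2z_i ) for every i ∈ {1,…,n} if and only if the pair (w, z) with w := Mz + q is a solution of the generalized linear complementarity problem GLCP(M, q), i.e., w = Mz + q, w ≥ 0 and z ≥ 0 componentwise, and z_i · ∏_{j=1}^{b_i} w_i^j = 0 for every i. -/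
/-!
The equation `z = min (min_j (w_j + z)) (2 z)` holds iff `z` lies below both arguments and
equals one of them. Lying below `2 z` means `z ≥ 0`, lying below every `w_j + z` means `w ≥ 0`,
and, given these, `z` equals `2 z` iff `z = 0` and equals the inner minimum iff some `w_j = 0`;
that disjunction is `z * ∏_j w_j = 0`.
-/

open Finset

section

variable {α : Type*} [CommRing α] [LinearOrder α] [IsStrictOrderedRing α]

theorem eq_min_two_mul_iff {a z : α} :
    z = min a (2 * z) ↔ 0 ≤ z ∧ z ≤ a ∧ (z = 0 ∨ a ≤ z) := by
  rw [eq_comm, min_eq_iff]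
  constructor
  · rintro (⟨rfl, h⟩ | ⟨h, h'⟩)
    · exact ⟨by linarith, le_rfl, Or.inr le_rfl⟩
    · exact ⟨by linarith, by linarith, Or.inl (by linarith)⟩
  · rintro ⟨hz, hza, rfl | haz⟩
    · exact Or.inr ⟨by simp, by simpa using hza⟩
    · exact Or.inl ⟨le_antisymm haz hza, by linarith⟩

theorem eq_min_inf'_add_two_mul_iff {ι : Type*} {s : Finset ι} (hs : s.Nonempty) (f : ι → α)
    (z : α) :
    z = min (s.inf' hs fun j => f j + z) (2 * z) ↔
      (∀ j ∈ s, 0 ≤ f j) ∧ 0 ≤ z ∧ z * ∏ j ∈ s, f j = 0 := by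
  simp only [eq_min_two_mul_iff, le_inf'_iff, inf'_le_iff, mul_eq_zero, prod_eq_zero_iff,
    le_add_iff_nonneg_left, add_le_iff_nonpos_left]
  constructor
  · rintro ⟨hz, hf, hc⟩
    exact ⟨hf, hz, hc.imp_right fun ⟨j, hj, hle⟩ => ⟨j, hj, le_antisymm hle (hf j hj)⟩⟩
  · rintro ⟨hf, hz, hc⟩
    exact ⟨hz, hf, hc.imp_right fun ⟨j, hj, h0⟩ => ⟨j, hj, h0.le⟩⟩

end

theorem glcp_iff_linBellman_general {n : ℕ} (b : Fin n → ℕ)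
    (hb : ∀ i, 1 ≤ b i)
    (M : Matrix (Σ i : Fin n, Fin (b i)) (Fin n) ℝ)
    (q : (Σ i : Fin n, Fin (b i)) → ℝ) (z : Fin n → ℝ) :
    (∀ i : Fin n,
        z i = min
          (Finset.univ.inf' (Finset.univ_nonempty_iff.mpr ⟨⟨0, hb i⟩⟩)
            fun j : Fin (b i) => (M.mulVec z + q) ⟨i, j⟩ + z i)
          (2 * z i)) ↔
      ((∀ s : Σ i : Fin n, Fin (b i), 0 ≤ (M.mulVec z + q) s) ∧
        (∀ i, 0 ≤ z i) ∧
        (∀ i : Fin n, z i * ∏ j : Fin (b i), (M.mulVec z + q) ⟨i, j⟩ = 0)) := by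
  simp only [eq_min_inf'_add_two_mul_iff, mem_univ, true_implies, forall_and, Sigma.forall]

/-- `z` satisfies `z i = min (min_j ((Mz + q)_i^j + z i)) (2 z i)` for every `i`
iff `(w, z)` with `w := Mz + q` is a solution of the generalized LCP `GLCP(M, q)`:
`w = Mz + q`, `w ≥ 0`, `z ≥ 0`, and `z i * ∏_j w_i^j = 0` for every `i`.
Here block indices are modelled by the sigma type `Σ i : Fin n, Fin (b i)`. -/
theorem glcp_iff_linBellman {n : ℕ} (hn : 1 ≤ n) (b : Fin n → ℕ)
    (hb : ∀ i, 1 ≤ b i)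
    (M : Matrix (Σ i : Fin n, Fin (b i)) (Fin n) ℝ)
    (q : (Σ i : Fin n, Fin (b i)) → ℝ) (z : Fin n → ℝ) :
    (∀ i : Fin n,
        z i = min
          (Finset.univ.inf' (Finset.univ_nonempty_iff.mpr ⟨⟨0, hb i⟩⟩)
            fun j : Fin (b i) => (M.mulVec z + q) ⟨i, j⟩ + z i)
          (2 * z i)) ↔
      ((∀ s : Σ i : Fin n, Fin (b i), 0 ≤ (M.mulVec z + q) s) ∧
        (∀ i, 0 ≤ z i) ∧
        (∀ i : Fin n, z i * ∏ j : Fin (b i), (M.mulVec z + q) ⟨i, j⟩ = 0)) :=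
  glcp_iff_linBellman_general b hb M q z
end

section
/- Let P_1,…,P_d ⊂ ℝ^d be nonempty finite point sets that are well-separated. Let p = (p_1,…,p_d) and p′ = (p′_1,…,p′_d) be two colorful selections (p_i, p′_i ∈ P_i), and suppose there exist v ∈ ℝ^d with v ≠ 0 and c ∈ ℝ such that ⟨v, p_i⟩ = c and ⟨v, p′_i⟩ = c for all i (i.e., all 2d points lie on a common hyperplane). Then the two colorful selections orient this hyperplane the same way: there exists λ > 0 such that D_p(x) = λ · D_{p′}(x) for all x ∈ ℝ^d. -/
open scoped Matrix

/-- `D_p x`: the determinant of the `d × d` matrix whose `i`-th row is `p i - x`. -/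
noncomputable def Dmap {d : ℕ} (p : Fin d → (Fin d → ℝ)) (x : Fin d → ℝ) : ℝ :=
  Matrix.det (Matrix.of fun i j => p i j - x j)

/-- Point sets `P 0, …, P (k-1)` in `ℝ^d` are well-separated: no affine subspace
of dimension at most `k - 2` intersects every convex hull `conv (P i)`. -/
def WellSeparated {d k : ℕ} (P : Fin k → Set (Fin d → ℝ)) : Prop :=
  ¬ ∃ F : AffineSubspace ℝ (Fin d → ℝ),
      (Module.finrank ℝ F.direction : ℤ) ≤ (k : ℤ) - 2 ∧
      ∀ i, ((F : Set (Fin d → ℝ)) ∩ convexHull ℝ (P i)).Nonempty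

/-! Subtracting one row from the others shows that `Dmap p` is affine, and it vanishes on the
hyperplane `H = {x | v ⬝ᵥ x = c}`; hence `Dmap p = μ (c - v ⬝ᵥ ·)` and `Dmap p' = μ' (c - v ⬝ᵥ ·)`,
and it remains to show `μ μ' > 0`. Fix `x ∉ H` and move the selection along the segment from `p`
to `p'`: its rows stay in `conv (P i) ∩ H`. If the determinant vanished somewhere, a kernel
vector of the rows `r i - x` would have coordinate sum `0` (pair with `v`), i.e. the rows `r i`
would be affinely dependent, and their affine span, of dimension at most `d - 2`, would meet every
`conv (P i)`. So the determinant keeps its sign along the segment. -/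

theorem exists_eq_mul_dotProduct_of_dotProduct_eq_zero {𝕜 n : Type*} [Field 𝕜] [Fintype n]
    [DecidableEq n] {v : n → 𝕜} (hv : v ≠ 0) (ℓ : (n → 𝕜) →ₗ[𝕜] 𝕜)
    (hℓ : ∀ y, v ⬝ᵥ y = 0 → ℓ y = 0) : ∃ μ, ∀ y, ℓ y = μ * v ⬝ᵥ y := by
  obtain ⟨j, hj⟩ : ∃ j, v j ≠ 0 := Function.ne_iff.mp hv
  refine ⟨ℓ (Pi.single j 1) / v j, fun y => ?_⟩
  have hker : ℓ (y - (v ⬝ᵥ y / v j) • Pi.single j 1) = 0 :=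
    hℓ _ (by simp [dotProduct_sub, dotProduct_single, div_mul_cancel₀ _ hj])
  rw [map_sub, map_smul, smul_eq_mul, sub_eq_zero] at hker
  rw [hker]
  ring

theorem exists_dotProduct_ne {R n : Type*} [Semiring R] [Fintype n] [DecidableEq n]
    {v : n → R} (hv : v ≠ 0) (c : R) : ∃ x, v ⬝ᵥ x ≠ c := by
  by_contra! h
  obtain ⟨j, hj⟩ : ∃ j, v j ≠ 0 := Function.ne_iff.mp hv
  exact hj (by simpa [← h 0, dotProduct_single] using h (Pi.single j 1))

theorem mul_pos_of_continuousOn_of_ne_zero {f : ℝ → ℝ} {a b : ℝ}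
    (hf : ContinuousOn f (Set.uIcc a b)) (h : ∀ t ∈ Set.uIcc a b, f t ≠ 0) :
    0 < f a * f b := by
  by_contra! hneg
  have h0 : (0 : ℝ) ∈ Set.uIcc (f a) (f b) := by
    rcases mul_nonpos_iff.mp hneg with h | h <;> simp [Set.mem_uIcc, h]
  obtain ⟨t, ht, hft⟩ := intermediate_value_uIcc hf h0
  exact h t ht hft

theorem Dmap_eq_det_updateRow {d : ℕ} (p : Fin d → Fin d → ℝ) (k : Fin d) (x : Fin d → ℝ) :
    Dmap p x = ((Matrix.of fun i => p i - p k).updateRow k (p k - x)).det := by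
  refine Matrix.det_eq_of_forall_row_eq_smul_add_const (fun i => if i = k then 0 else 1) k
    (by simp) fun i j => ?_
  rcases eq_or_ne i k with rfl | hi
  · simp
  · simp [hi]

theorem exists_linearMap_Dmap_eq {d : ℕ} (p : Fin d → Fin d → ℝ) (k : Fin d) :
    ∃ ℓ : (Fin d → ℝ) →ₗ[ℝ] ℝ, ∀ x, Dmap p x = ℓ (p k - x) :=
  ⟨Matrix.detRowAlternating.toMultilinearMap.toLinearMap (fun i => p i - p k) k,
    fun x => Dmap_eq_det_updateRow p k x⟩

theorem Dmap_eq_zero_of_dotProduct_eq {d : ℕ} {p : Fin d → Fin d → ℝ} {v : Fin d → ℝ}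
    (hv : v ≠ 0) {c : ℝ} (hp : ∀ i, v ⬝ᵥ p i = c) {x : Fin d → ℝ} (hx : v ⬝ᵥ x = c) :
    Dmap p x = 0 := by
  refine Matrix.exists_mulVec_eq_zero_iff.mp ⟨v, hv, funext fun i => ?_⟩
  change (p i - x) ⬝ᵥ v = 0
  rw [dotProduct_comm, dotProduct_sub, hp, hx, sub_self]

theorem exists_Dmap_eq_mul {d : ℕ} {p : Fin d → Fin d → ℝ} {v : Fin d → ℝ} (hv : v ≠ 0)
    {c : ℝ} (hp : ∀ i, v ⬝ᵥ p i = c) : ∃ μ, ∀ x, Dmap p x = μ * (c - v ⬝ᵥ x) := by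
  obtain ⟨k, -⟩ := Function.ne_iff.mp hv
  obtain ⟨ℓ, hℓ⟩ := exists_linearMap_Dmap_eq p k
  obtain ⟨μ, hμ⟩ := exists_eq_mul_dotProduct_of_dotProduct_eq_zero hv ℓ fun y hy => by
    rw [← sub_sub_cancel (p k) y, ← hℓ]
    exact Dmap_eq_zero_of_dotProduct_eq hv hp (by rw [dotProduct_sub, hp, hy, sub_zero])
  exact ⟨μ, fun x => by rw [hℓ, hμ, dotProduct_sub, hp]⟩

theorem WellSeparated.affineIndependent {d k : ℕ} {P : Fin k → Set (Fin d → ℝ)}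
    (hws : WellSeparated P) {r : Fin k → Fin d → ℝ} (hr : ∀ i, r i ∈ convexHull ℝ (P i)) :
    AffineIndependent ℝ r := by
  rcases k with _ | k
  · exact affineIndependent_of_subsingleton ℝ r
  by_contra hdep
  rw [affineIndependent_iff_le_finrank_vectorSpan ℝ r (Fintype.card_fin _), not_le] at hdep
  refine hws ⟨affineSpan ℝ (Set.range r), ?_, fun i => ⟨r i, ?_, hr i⟩⟩
  · rw [direction_affineSpan]
    omega
  · exact subset_affineSpan ℝ _ (Set.mem_range_self i)

theorem not_affineIndependent_of_Dmap_eq_zero {d : ℕ} {r : Fin d → Fin d → ℝ}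
    {v : Fin d → ℝ} {c : ℝ} (hr : ∀ i, v ⬝ᵥ r i = c) {x : Fin d → ℝ} (hx : v ⬝ᵥ x ≠ c)
    (h0 : Dmap r x = 0) : ¬ AffineIndependent ℝ r := by
  obtain ⟨a, ha, hdep⟩ := Matrix.exists_vecMul_eq_zero_iff.mpr h0
  have hcomb : ∑ i, a i • r i = (∑ i, a i) • x := by
    funext j
    have hj := congrFun hdep j
    simp only [Matrix.vecMul, dotProduct, Matrix.of_apply, mul_sub, Finset.sum_sub_distrib,
      Pi.zero_apply, sub_eq_zero] at hj
    simpa [Finset.sum_apply, Finset.sum_mul] using hj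
  have hsum : ∑ i, a i = 0 := by
    have hv := congrArg (v ⬝ᵥ ·) hcomb
    simp only [dotProduct_sum, dotProduct_smul, hr, smul_eq_mul, ← Finset.sum_mul] at hv
    exact (mul_eq_zero.mp (by linear_combination hv)).resolve_right (sub_ne_zero.mpr hx.symm)
  rw [affineIndependent_iff_of_fintype]
  intro hind
  obtain ⟨i, hi⟩ := Function.ne_iff.mp ha
  refine hi (hind a hsum ?_ i)
  rw [Finset.weightedVSub_eq_linear_combination _ hsum, hcomb, hsum, zero_smul]

theorem Dmap_ne_zero_of_wellSeparated {d : ℕ} {P : Fin d → Set (Fin d → ℝ)}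
    (hws : WellSeparated P) {r : Fin d → Fin d → ℝ} (hr : ∀ i, r i ∈ convexHull ℝ (P i))
    {v : Fin d → ℝ} {c : ℝ} (hrc : ∀ i, v ⬝ᵥ r i = c) {x : Fin d → ℝ} (hx : v ⬝ᵥ x ≠ c) :
    Dmap r x ≠ 0 := fun h0 =>
  not_affineIndependent_of_Dmap_eq_zero hrc hx h0 (hws.affineIndependent hr)

theorem Dmap_mul_pos_of_wellSeparated {d : ℕ} {P : Fin d → Set (Fin d → ℝ)}
    (hws : WellSeparated P) {r r' : Fin d → Fin d → ℝ} (hr : ∀ i, r i ∈ convexHull ℝ (P i))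
    (hr' : ∀ i, r' i ∈ convexHull ℝ (P i)) {v : Fin d → ℝ} {c : ℝ}
    (hrc : ∀ i, v ⬝ᵥ r i = c) (hr'c : ∀ i, v ⬝ᵥ r' i = c) {x : Fin d → ℝ} (hx : v ⬝ᵥ x ≠ c) :
    0 < Dmap r x * Dmap r' x := by
  have hcont : Continuous fun t : ℝ => Dmap ((1 - t) • r + t • r') x := by
    unfold Dmap
    fun_prop
  have key := mul_pos_of_continuousOn_of_ne_zero (a := 0) (b := 1) hcont.continuousOn
    fun t ht => by
      rw [Set.uIcc_of_le zero_le_one] at ht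
      refine Dmap_ne_zero_of_wellSeparated hws (fun i => ?_) (fun i => ?_) hx
      · exact convex_convexHull ℝ (P i) (hr i) (hr' i) (by linarith [ht.2]) ht.1 (by ring)
      · simp only [Pi.add_apply, Pi.smul_apply, dotProduct_add, dotProduct_smul, hrc, hr'c,
          smul_eq_mul]
        ring
  simpa using key

theorem colorful_same_orientation_general {d : ℕ}
    (P : Fin d → Set (Fin d → ℝ))
    (hws : WellSeparated P)
    (p p' : Fin d → (Fin d → ℝ))
    (hp : ∀ i, p i ∈ P i) (hp' : ∀ i, p' i ∈ P i)
    (v : Fin d → ℝ) (hv : v ≠ 0) (c : ℝ)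
    (hvp : ∀ i, v ⬝ᵥ p i = c) (hvp' : ∀ i, v ⬝ᵥ p' i = c) :
    ∃ lam : ℝ, 0 < lam ∧ ∀ x : Fin d → ℝ, Dmap p x = lam * Dmap p' x := by
  obtain ⟨μ, hμ⟩ := exists_Dmap_eq_mul hv hvp
  obtain ⟨μ', hμ'⟩ := exists_Dmap_eq_mul hv hvp'
  obtain ⟨x, hx⟩ := exists_dotProduct_ne hv c
  have hpos := Dmap_mul_pos_of_wellSeparated hws (fun i => subset_convexHull ℝ _ (hp i))
    (fun i => subset_convexHull ℝ _ (hp' i)) hvp hvp' hx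
  rw [hμ, hμ'] at hpos
  have hμμ' : 0 < μ * μ' :=
    pos_of_mul_pos_left (b := (c - v ⬝ᵥ x) ^ 2) (by linear_combination hpos) (sq_nonneg _)
  refine ⟨μ / μ', div_pos_iff.mpr (mul_pos_iff.mp hμμ'), fun y => ?_⟩
  rw [hμ, hμ', ← mul_assoc, div_mul_cancel₀ μ (right_ne_zero_of_mul hμμ'.ne')]

/-- In a well-separated family, any two colorful selections lying on a common
hyperplane orient it the same way: `D_p = λ • D_{p'}` for some `λ > 0`. -/
theorem colorful_same_orientation {d : ℕ}
    (P : Fin d → Set (Fin d → ℝ))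
    (hfin : ∀ i, (P i).Finite) (hne : ∀ i, (P i).Nonempty)
    (hws : WellSeparated P)
    (p p' : Fin d → (Fin d → ℝ))
    (hp : ∀ i, p i ∈ P i) (hp' : ∀ i, p' i ∈ P i)
    (v : Fin d → ℝ) (hv : v ≠ 0) (c : ℝ)
    (hvp : ∀ i, v ⬝ᵥ p i = c) (hvp' : ∀ i, v ⬝ᵥ p' i = c) :
    ∃ lam : ℝ, 0 < lam ∧ ∀ x : Fin d → ℝ, Dmap p x = lam * Dmap p' x :=
  colorful_same_orientation_general P hws p p' hp hp' v hv c hvp hvp'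
end

section
/- Let P_1,…,P_d ⊂ ℝ^d be nonempty finite point sets with designated points b_i ∈ P_i for each i. Assume the points b_1,…,b_d affinely span a hyperplane H of ℝ^d and that, with π the orthogonal projection of ℝ^d onto H, the projected sets π(P_1),…,π(P_d) are well-separated (so the family P_1,…,P_d is strongly well-separated with base points b_1,…,b_d). For a colorful selection p = (p_1,…,p_d) with p_i ∈ P_i, let g_p ∈ ℝ^d denote the (constant) linear part of the affine map D_p, i.e., the unique vector with D_p(x) = D_p(0) + ⟨g_p, x⟩ for all x. Then for every colorful selection p, one has ⟨g_p, g_b⟩ > 0, where b = (b_1,…,b_d); in particular the positive-side normal vector of every colorful hyperplane has positive inner product with the positive-side normal vector of the hyperplane spanned by the base points. -/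
/-!
For a selection `q` and any index `k`, the linear part `g_q` of `D_q` satisfies
`⟨g_q, u⟩ = D_q(q_k + u)`, since `D_q` vanishes at `q_k`. Moving the points `q_i` along `u`
does not change `D_q(q_k + u)` (row operations), and `p_i - π p_i` is a multiple of the normal
`g_b` of `H`; so `⟨g_p, g_b⟩` is the value of `q ↦ D_q(q_k + g_b)` at the projected selection
`π ∘ p`. On the convex set `∏ conv(π P_i) ⊆ H^d`, well-separation forces every selection to be
affinely independent, so it spans `H`, `q_k + g_b` lies off that span and the value is nonzero.
By connectedness its sign is constant, and at `q = b` it is `|g_b|² > 0`.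
-/

open scoped Matrix

theorem exists_notMem_affineSpan_range {d : ℕ} (q : Fin d → Fin d → ℝ) :
    ∃ x, x ∉ affineSpan ℝ (Set.range q) := by
  by_contra! h
  have htop : affineSpan ℝ (Set.range q) = ⊤ := eq_top_iff.2 fun x _ => h x
  cases d with
  | zero => simp [Set.range_eq_empty] at htop
  | succ n =>
    have hle := finrank_vectorSpan_range_le ℝ q (Fintype.card_fin _)
    rw [← direction_affineSpan, htop, AffineSubspace.direction_top, finrank_top,
      Module.finrank_fin_fun] at hle
    omega

namespace Dmap

variable {d : ℕ}

theorem eq_zero_iff_exists (q : Fin d → Fin d → ℝ) (x : Fin d → ℝ) :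
    Dmap q x = 0 ↔ ∃ w : Fin d → ℝ, w ≠ 0 ∧ ∑ i, w i • q i = (∑ i, w i) • x := by
  classical
  have hvecMul (w : Fin d → ℝ) :
      w ᵥ* Matrix.of (fun i j => q i j - x j) = ∑ i, w i • q i - (∑ i, w i) • x := by
    ext j
    simp [Matrix.vecMul, dotProduct, Finset.sum_apply, mul_sub, Finset.sum_mul]
  simp only [Dmap, ← Matrix.exists_vecMul_eq_zero_iff, hvecMul, sub_eq_zero]

theorem apply_self (q : Fin d → Fin d → ℝ) (k : Fin d) : Dmap q (q k) = 0 :=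
  Matrix.det_eq_zero_of_row_eq_zero k fun _ => sub_self _

theorem eq_zero_of_mem_affineSpan {q : Fin d → Fin d → ℝ} {x : Fin d → ℝ}
    (hx : x ∈ affineSpan ℝ (Set.range q)) : Dmap q x = 0 := by
  obtain ⟨w, hw, rfl⟩ := eq_affineCombination_of_mem_affineSpan_of_fintype hx
  refine (eq_zero_iff_exists q _).2 ⟨w, fun h => by simp [h] at hw, ?_⟩
  rw [hw, one_smul, Finset.univ.affineCombination_eq_linear_combination q w hw]

theorem mem_affineSpan_of_eq_zero {q : Fin d → Fin d → ℝ} (hq : AffineIndependent ℝ q)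
    {x : Fin d → ℝ} (hx : Dmap q x = 0) : x ∈ affineSpan ℝ (Set.range q) := by
  obtain ⟨w, hw0, hw⟩ := (eq_zero_iff_exists q x).1 hx
  by_cases hs : ∑ i, w i = 0
  · rw [hs, zero_smul] at hw
    exact absurd (funext fun i => affineIndependent_iff.1 hq _ w hs hw i (Finset.mem_univ i)) hw0
  · have hw1 : ∑ i, (∑ j, w j)⁻¹ * w i = 1 := by rw [← Finset.mul_sum, inv_mul_cancel₀ hs]
    have hx : x = ∑ i, ((∑ j, w j)⁻¹ * w i) • q i := by
      simp_rw [mul_smul, ← Finset.smul_sum, hw, smul_smul, inv_mul_cancel₀ hs, one_smul]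
    rw [hx, ← Finset.univ.affineCombination_eq_linear_combination q _ hw1]
    exact affineCombination_mem_affineSpan hw1 q

theorem add_smul_rows (q : Fin d → Fin d → ℝ) (c : Fin d → ℝ) (v : Fin d → ℝ) (k : Fin d) :
    Dmap (fun i => q i + c i • v) (q k + c k • v + v) = Dmap q (q k + v) :=
  Matrix.det_eq_of_forall_row_eq_smul_add_const (fun i => c k - c i) k (sub_self _)
    fun i _ => by
      simp only [Pi.add_apply, Pi.smul_apply, smul_eq_mul, Matrix.of_apply, sub_add_cancel_left,
        mul_neg]
      ring

variable {q : Fin d → Fin d → ℝ} {g : Fin d → ℝ}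

theorem dotProduct_eq_apply_add (hg : ∀ x, Dmap q x = Dmap q 0 + g ⬝ᵥ x) (k : Fin d)
    (v : Fin d → ℝ) : g ⬝ᵥ v = Dmap q (q k + v) := by
  have h₁ := hg (q k + v)
  have h₂ := hg (q k)
  rw [apply_self] at h₂
  rw [dotProduct_add] at h₁
  linarith

theorem dotProduct_eq_zero_of_mem_direction (hg : ∀ x, Dmap q x = Dmap q 0 + g ⬝ᵥ x)
    {w : Fin d → ℝ} (hw : w ∈ (affineSpan ℝ (Set.range q)).direction) : g ⬝ᵥ w = 0 := by
  rw [direction_affineSpan, vectorSpan_def] at hw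
  induction hw using Submodule.span_induction with
  | mem _ hw =>
    obtain ⟨_, ⟨i, rfl⟩, _, ⟨j, rfl⟩, rfl⟩ := hw
    dsimp only
    rw [dotProduct_eq_apply_add hg j, vsub_eq_sub, add_sub_cancel, apply_self]
  | zero => exact dotProduct_zero g
  | add _ _ _ _ hv hw => rw [dotProduct_add, hv, hw, add_zero]
  | smul _ _ _ hv => rw [dotProduct_smul, hv, smul_zero]

theorem linearPart_ne_zero (hq : AffineIndependent ℝ q) (k : Fin d)
    (hg : ∀ x, Dmap q x = Dmap q 0 + g ⬝ᵥ x) : g ≠ 0 := by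
  rintro rfl
  obtain ⟨x, hx⟩ := exists_notMem_affineSpan_range q
  refine hx (mem_affineSpan_of_eq_zero hq ?_)
  rw [← add_sub_cancel (q k) x, ← dotProduct_eq_apply_add hg k, zero_dotProduct]

end Dmap

theorem exists_eq_smul_of_dotProduct_eq_zero {d : ℕ} {W : Submodule ℝ (Fin d → ℝ)}
    (hW : Module.finrank ℝ W + 1 = d) {u v : Fin d → ℝ} (hu : u ≠ 0)
    (huW : ∀ w ∈ W, u ⬝ᵥ w = 0) (hvW : ∀ w ∈ W, v ⬝ᵥ w = 0) : ∃ t : ℝ, v = t • u := by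
  have huW' : u ∉ W := fun h => hu (dotProduct_self_eq_zero.1 (huW u h))
  have hinf : W ⊓ ℝ ∙ u = ⊥ :=
    disjoint_iff.1 ((Submodule.disjoint_span_singleton' hu).2 huW')
  have hsup : W ⊔ ℝ ∙ u = ⊤ := by
    apply Submodule.eq_top_of_finrank_eq
    have := Submodule.finrank_sup_add_finrank_inf_eq W (ℝ ∙ u)
    rw [hinf, finrank_bot, finrank_span_singleton hu, Module.finrank_fin_fun] at *
    omega
  obtain ⟨w, hw, _, hz, hwz⟩ := Submodule.mem_sup.1 (hsup ▸ Submodule.mem_top : v ∈ W ⊔ ℝ ∙ u)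
  obtain ⟨t, rfl⟩ := Submodule.mem_span_singleton.1 hz
  have hw0 : w ⬝ᵥ w = 0 :=
    calc w ⬝ᵥ w = (v - t • u) ⬝ᵥ w := by rw [← hwz, add_sub_cancel_right]
      _ = 0 := by rw [sub_dotProduct, smul_dotProduct, hvW w hw, huW w hw, smul_zero, sub_zero]
  exact ⟨t, by rw [← hwz, dotProduct_self_eq_zero.1 hw0, zero_add]⟩

section OrthogonalProjection

variable {d : ℕ} {E : AffineSubspace ℝ (Fin d → ℝ)} {π : (Fin d → ℝ) → Fin d → ℝ}

theorem proj_eq_self_of_mem (horth : ∀ x, ∀ y ∈ E, (x - π x) ⬝ᵥ (y - π x) = 0)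
    {y : Fin d → ℝ} (hy : y ∈ E) : π y = y :=
  (sub_eq_zero.1 (dotProduct_self_eq_zero.1 (horth y y hy))).symm

theorem sub_proj_dotProduct_eq_zero (hmem : ∀ x, π x ∈ E)
    (horth : ∀ x, ∀ y ∈ E, (x - π x) ⬝ᵥ (y - π x) = 0) (z : Fin d → ℝ) {w : Fin d → ℝ}
    (hw : w ∈ E.direction) : (z - π z) ⬝ᵥ w = 0 := by
  simpa using horth z (w +ᵥ π z) (AffineSubspace.vadd_mem_of_mem_direction hw (hmem z))

end OrthogonalProjection

namespace WellSeparated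

variable {d : ℕ}

theorem affineIndependent_s12 {k : ℕ} {Q : Fin k → Set (Fin d → ℝ)} (hQ : WellSeparated Q)
    {q : Fin k → Fin d → ℝ} (hq : ∀ i, q i ∈ convexHull ℝ (Q i)) : AffineIndependent ℝ q := by
  cases k with
  | zero => exact affineIndependent_of_subsingleton ℝ q
  | succ n =>
    rw [affineIndependent_iff_le_finrank_vectorSpan ℝ q (Fintype.card_fin _)]
    by_contra! hlt
    refine hQ ⟨affineSpan ℝ (Set.range q), ?_, fun i => ⟨q i, mem_affineSpan ℝ ⟨i, rfl⟩, hq i⟩⟩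
    rw [direction_affineSpan]
    omega

variable {Q : Fin d → Set (Fin d → ℝ)} {E : AffineSubspace ℝ (Fin d → ℝ)} {u : Fin d → ℝ}

theorem Dmap_apply_add_ne_zero (hQ : WellSeparated Q) (hQE : ∀ i, Q i ⊆ E) (hu : u ≠ 0)
    (huE : ∀ w ∈ E.direction, u ⬝ᵥ w = 0) {q : Fin d → Fin d → ℝ}
    (hq : ∀ i, q i ∈ convexHull ℝ (Q i)) (k : Fin d) : Dmap q (q k + u) ≠ 0 := by
  intro h0
  have hspan : affineSpan ℝ (Set.range q) ≤ E :=
    affineSpan_le.2 (Set.range_subset_iff.2 fun i => convexHull_min (hQE i) E.convex (hq i))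
  have hmem := Dmap.mem_affineSpan_of_eq_zero (hQ.affineIndependent_s12 hq) h0
  have hu_dir : u ∈ E.direction := AffineSubspace.direction_le hspan
    (by simpa using AffineSubspace.vsub_mem_direction hmem (mem_affineSpan ℝ ⟨k, rfl⟩))
  exact hu (dotProduct_self_eq_zero.1 (huE u hu_dir))

theorem Dmap_apply_add_pos (hQ : WellSeparated Q) (hQE : ∀ i, Q i ⊆ E) (hu : u ≠ 0)
    (huE : ∀ w ∈ E.direction, u ⬝ᵥ w = 0) {r q : Fin d → Fin d → ℝ}
    (hr : ∀ i, r i ∈ convexHull ℝ (Q i)) (hq : ∀ i, q i ∈ convexHull ℝ (Q i)) (k : Fin d)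
    (hr0 : 0 < Dmap r (r k + u)) : 0 < Dmap q (q k + u) := by
  have hS : IsPreconnected (Set.univ.pi fun i => convexHull ℝ (Q i)) :=
    (convex_pi fun i _ => convex_convexHull ℝ _).isPreconnected
  have hcont : Continuous fun q : Fin d → Fin d → ℝ => Dmap q (q k + u) := by
    unfold Dmap
    fun_prop
  by_contra! hle
  obtain ⟨s, hs, hs0⟩ := hS.intermediate_value (fun i _ => hq i) (fun i _ => hr i)
    hcont.continuousOn ⟨hle, hr0.le⟩
  exact hQ.Dmap_apply_add_ne_zero hQE hu huE (fun i => hs i (Set.mem_univ i)) k hs0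

end WellSeparated

theorem stronglyWellSeparated_no_opposite_orientations_general {d : ℕ}
    (P : Fin d → Set (Fin d → ℝ))
    (b : Fin d → (Fin d → ℝ)) (hb : ∀ i, b i ∈ P i)
    (π : (Fin d → ℝ) → (Fin d → ℝ))
    (hπmem : ∀ x, π x ∈ affineSpan ℝ (Set.range b))
    (hπorth : ∀ x, ∀ y ∈ affineSpan ℝ (Set.range b), (x - π x) ⬝ᵥ (y - π x) = 0)
    (hws : WellSeparated fun i => π '' P i) :
    ∀ p : Fin d → (Fin d → ℝ), (∀ i, p i ∈ P i) →
      ∀ gp gb : Fin d → ℝ,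
        (∀ x, Dmap p x = Dmap p 0 + gp ⬝ᵥ x) →
        (∀ x, Dmap b x = Dmap b 0 + gb ⬝ᵥ x) →
        0 < gp ⬝ᵥ gb := by
  intro p hp gp gb hgp hgb
  obtain ⟨k⟩ : Nonempty (Fin d) :=
    Set.range_nonempty_iff_nonempty.1 ((affineSpan_nonempty ℝ).1 ⟨_, hπmem 0⟩)
  have hπP : ∀ i, π '' P i ⊆ affineSpan ℝ (Set.range b) := fun i =>
    Set.image_subset_iff.2 fun x _ => hπmem x
  have hbπ : ∀ i, b i ∈ convexHull ℝ (π '' P i) := fun i =>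
    subset_convexHull ℝ _ ⟨b i, hb i, proj_eq_self_of_mem hπorth (mem_affineSpan ℝ ⟨i, rfl⟩)⟩
  have hbind : AffineIndependent ℝ b := hws.affineIndependent_s12 hbπ
  have hgb0 : gb ≠ 0 := Dmap.linearPart_ne_zero hbind k hgb
  have hgbH : ∀ w ∈ (affineSpan ℝ (Set.range b)).direction, gb ⬝ᵥ w = 0 := fun _ =>
    Dmap.dotProduct_eq_zero_of_mem_direction hgb
  have hH : Module.finrank ℝ (affineSpan ℝ (Set.range b)).direction + 1 = d := by
    have hd : d - 1 + 1 = d := Nat.sub_add_cancel k.pos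
    rwa [direction_affineSpan, hbind.finrank_vectorSpan (by rw [Fintype.card_fin, hd])]
  choose t ht using fun i => exists_eq_smul_of_dotProduct_eq_zero hH hgb0 hgbH
    fun _ => sub_proj_dotProduct_eq_zero hπmem hπorth (p i)
  have hp_eq : p = fun i => π (p i) + t i • gb := funext fun i => by rw [← ht i, add_sub_cancel]
  calc 0 < Dmap (fun i => π (p i)) (π (p k) + gb) := by
        refine hws.Dmap_apply_add_pos hπP hgb0 hgbH hbπ
          (fun i => subset_convexHull ℝ _ ⟨p i, hp i, rfl⟩) k ?_
        rw [← Dmap.dotProduct_eq_apply_add hgb]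
        simpa using Matrix.dotProduct_star_self_pos_iff.2 hgb0
    _ = Dmap p (p k + gb) := by
        rw [← Dmap.add_smul_rows _ t gb k, ← hp_eq, ← ht k, add_sub_cancel]
    _ = gp ⬝ᵥ gb := (Dmap.dotProduct_eq_apply_add hgp k gb).symm

/-- For a strongly well-separated family with base points `b i ∈ P i` spanning a
hyperplane `H` (with orthogonal projection `π` onto `H`, and the projected sets
well-separated), the linear part `g_p` of `D_p` for every colorful selection `p`
has positive inner product with the linear part `g_b` of `D_b`. -/
theorem stronglyWellSeparated_no_opposite_orientations {d : ℕ}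
    (P : Fin d → Set (Fin d → ℝ))
    (hfin : ∀ i, (P i).Finite) (hne : ∀ i, (P i).Nonempty)
    (b : Fin d → (Fin d → ℝ)) (hb : ∀ i, b i ∈ P i)
    (hH : Module.finrank ℝ (affineSpan ℝ (Set.range b)).direction = d - 1)
    (π : (Fin d → ℝ) → (Fin d → ℝ))
    (hπmem : ∀ x, π x ∈ affineSpan ℝ (Set.range b))
    (hπorth : ∀ x, ∀ y ∈ affineSpan ℝ (Set.range b), (x - π x) ⬝ᵥ (y - π x) = 0)
    (hws : WellSeparated fun i => π '' P i) :
    ∀ p : Fin d → (Fin d → ℝ), (∀ i, p i ∈ P i) →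
      ∀ gp gb : Fin d → ℝ,
        (∀ x, Dmap p x = Dmap p 0 + gp ⬝ᵥ x) →
        (∀ x, Dmap b x = Dmap b 0 + gb ⬝ᵥ x) →
        0 < gp ⬝ᵥ gb :=
  stronglyWellSeparated_no_opposite_orientations_general P b hb π hπmem hπorth hws
end

section
/- Let d ≥ 2 and write points of ℝ^d as (y, s) with y ∈ ℝ^{d−1} and s ∈ ℝ; let H_0 = {(y, 0) : y ∈ ℝ^{d−1}} be the horizontal hyperplane. For each i ∈ {1,…,d}, let b_i = (β_i, 0) ∈ H_0 (non-movable) and m_i = (μ_i, 0) ∈ H_0 (movable) be points, and assume b_1,…,b_d affinely span H_0. Suppose there exists an affine subspace f ⊆ H_0 of dimension at most d−2 that intersects the segment [b_i, m_i] for every i ∈ {1,…,d} (i.e., the flattened family is not well-separated). For t ∈ ℝ^d define the lifted points m_i(t) := (μ_i, t_i). Then there exist t ∈ ℝ^d and two distinct pairs (u, c) ≠ (u′, c′) in ℝ^{d−1} × ℝ such that both are colorful lower tangents of the lifted family {b_i, m_i(t) : i ∈ {1,…,d}}. -/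
open scoped Matrix

/-- `(u, c)` is a colorful lower tangent of the lifted family
`{(β i, 0), (μ i, t i) : i}` in `ℝ^{d-1} × ℝ`: writing `g (y, s) = s - ⟨u, y⟩ - c`,
all points lie on or above the hyperplane `s = ⟨u, y⟩ + c`, and for every color at
least one of its two points lies on it. -/
def ColorfulLowerTangent {d : ℕ} (β μ : Fin d → (Fin (d - 1) → ℝ))
    (t : Fin d → ℝ) (u : Fin (d - 1) → ℝ) (c : ℝ) : Prop :=
  (∀ i, 0 ≤ 0 - u ⬝ᵥ β i - c ∧ 0 ≤ t i - u ⬝ᵥ μ i - c) ∧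
  (∀ i, 0 - u ⬝ᵥ β i - c = 0 ∨ t i - u ⬝ᵥ μ i - c = 0)

/-!
Pick a nonzero affine function `ℓ` vanishing on `f`. Since `f` meets every segment
`[β i, μ i]`, `ℓ` never takes the same strict sign at `β i` and at `μ i`. The `β i` form an
affine basis, so some affine `g` has `g (β i) = min (ℓ (β i)) 0`; then `max g (g - ℓ)` vanishes
at every `β i`. Lift `μ i` to height `max g (g - ℓ)` as well. Both graphs of `g` and `g - ℓ` lie
below all lifted points, and one of them misses both points of colour `i` only if it is strictly
below the other one at `β i` and at `μ i`, i.e. only if `ℓ` has the same strict sign there.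
-/

theorem AffineMap.exists_dotProduct_add_eq {R m : Type*} [CommRing R] [Fintype m]
    (g : (m → R) →ᵃ[R] R) : ∃ (u : m → R) (c : R), ∀ y, g y = u ⬝ᵥ y + c := by
  classical
  obtain ⟨u, hu⟩ : ∃ u, g.linear = dotProductBilin R R u :=
    ⟨fun j => g.linear (Pi.single j 1), LinearMap.pi_ext fun i x => by
      rw [← mul_one x, ← smul_eq_mul, Pi.single_smul', map_smul, map_smul]
      simp [dotProduct_single]⟩
  refine ⟨u, g 0, fun y => ?_⟩
  have h := g.linearMap_vsub y 0
  rw [hu, vsub_eq_sub, vsub_eq_sub, sub_zero] at h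
  exact eq_add_of_sub_eq h.symm

theorem AffineSubspace.exists_affineMap_ne_zero_of_finrank_lt {K V : Type*} [Field K]
    [AddCommGroup V] [Module K V] [FiniteDimensional K V] (f : AffineSubspace K V)
    (hne : (f : Set V).Nonempty) (hf : Module.finrank K f.direction < Module.finrank K V) :
    ∃ ℓ : V →ᵃ[K] K, ℓ ≠ 0 ∧ ∀ x ∈ f, ℓ x = 0 := by
  obtain ⟨q, hq⟩ := hne
  obtain ⟨φ, hφ0, hφ⟩ := Submodule.exists_dual_map_eq_bot_of_lt_top
    (Submodule.lt_top_of_finrank_lt_finrank hf) inferInstance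
  refine ⟨φ.toAffineMap - AffineMap.const K V (φ q), fun h => hφ0 ?_, fun x hx => ?_⟩
  · ext v
    simpa using congrArg (fun ℓ : V →ᵃ[K] K => ℓ (v + q)) h
  · have : φ (x - q) = 0 := by
      rw [← Submodule.mem_bot K, ← hφ]
      exact Submodule.mem_map_of_mem (AffineSubspace.vsub_mem_direction hx hq)
    simpa [sub_eq_zero] using this

theorem affineIndependent_of_affineSpan_eq_top {k V P ι : Type*} [DivisionRing k]
    [AddCommGroup V] [Module k V] [FiniteDimensional k V] [AddTorsor V P] [Fintype ι]
    {p : ι → P} (hc : Fintype.card ι = Module.finrank k V + 1)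
    (hp : affineSpan k (Set.range p) = ⊤) : AffineIndependent k p := by
  rw [affineIndependent_iff_finrank_vectorSpan_eq k p hc, ← direction_affineSpan, hp,
    AffineSubspace.direction_top, finrank_top]

theorem AffineBasis.exists_affineMap_apply_eq {k V P ι : Type*} [Ring k]
    [AddCommGroup V] [Module k V] [AddTorsor V P] [Fintype ι]
    (b : AffineBasis ι k P) (w : ι → k) : ∃ g : P →ᵃ[k] k, ∀ i, g (b i) = w i := by
  classical
  refine ⟨(Fintype.linearCombination k w).toAffineMap.comp b.coords, fun i => ?_⟩
  simp [Fintype.linearCombination_apply, b.coords_apply, b.coord_apply]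

theorem AffineMap.not_lt_and_lt_of_mem_segment_of_eq {𝕜 E : Type*} [Field 𝕜] [LinearOrder 𝕜]
    [IsStrictOrderedRing 𝕜] [AddCommGroup E] [Module 𝕜 E] (g h : E →ᵃ[𝕜] 𝕜) {a b x : E}
    (hx : x ∈ segment 𝕜 a b) (hgh : g x = h x) : ¬(g a < h a ∧ g b < h b) := by
  rintro ⟨ha, hb⟩
  have hmem : (g - h) x ∈ segment 𝕜 ((g - h) a) ((g - h) b) :=
    image_segment 𝕜 (g - h) a b ▸ Set.mem_image_of_mem _ hx
  rw [segment_eq_uIcc, Set.mem_uIcc] at hmem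
  simp only [AffineMap.coe_sub, Pi.sub_apply] at hmem
  rcases hmem with h' | h' <;> linarith [h'.1, h'.2]

theorem colorfulLowerTangent_of_max_eq {d : ℕ} {β μ : Fin d → (Fin (d - 1) → ℝ)}
    {t : Fin d → ℝ} {u : Fin (d - 1) → ℝ} {c : ℝ} (g h : (Fin (d - 1) → ℝ) → ℝ)
    (hg : ∀ y, g y = u ⬝ᵥ y + c) (hβ : ∀ i, max (g (β i)) (h (β i)) = 0)
    (ht : ∀ i, t i = max (g (μ i)) (h (μ i)))
    (hsep : ∀ i, ¬(g (β i) < h (β i) ∧ g (μ i) < h (μ i))) :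
    ColorfulLowerTangent β μ t u c := by
  have hgβ : ∀ i, 0 - u ⬝ᵥ β i - c = -g (β i) := fun i => by rw [hg]; ring
  have hgμ : ∀ i, t i - u ⬝ᵥ μ i - c = t i - g (μ i) := fun i => by rw [hg]; ring
  simp only [ColorfulLowerTangent, hgβ, hgμ, neg_nonneg, neg_eq_zero, sub_nonneg, sub_eq_zero]
  refine ⟨fun i => ⟨hβ i ▸ le_max_left _ _, ht i ▸ le_max_left _ _⟩, fun i => ?_⟩
  by_contra! hne
  refine hsep i ⟨not_le.mp fun hle => hne.1 ?_, not_le.mp fun hle => hne.2 ?_⟩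
  · rw [← hβ i, max_eq_left hle]
  · rw [ht i, max_eq_left hle]

/-- If the non-movable points `b i = (β i, 0)` affinely span the horizontal hyperplane
`H₀` and some affine flat `f ⊆ H₀` of dimension at most `d - 2` intersects every
segment `[b i, m i]` (the flattened family is not well-separated), then the movable
points can be lifted to heights `t` so that two distinct hyperplanes are both
colorful lower tangents of the lifted family. -/
theorem not_wellSeparated_two_lower_tangents {d : ℕ} (hd : 2 ≤ d)
    (β μ : Fin d → (Fin (d - 1) → ℝ))
    (hspan : affineSpan ℝ (Set.range β) = ⊤)
    (f : AffineSubspace ℝ (Fin (d - 1) → ℝ))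
    (hf : (Module.finrank ℝ f.direction : ℤ) ≤ (d : ℤ) - 2)
    (hstab : ∀ i, ((f : Set (Fin (d - 1) → ℝ)) ∩ segment ℝ (β i) (μ i)).Nonempty) :
    ∃ (t : Fin d → ℝ) (u u' : Fin (d - 1) → ℝ) (c c' : ℝ),
      (u, c) ≠ (u', c') ∧
      ColorfulLowerTangent β μ t u c ∧ ColorfulLowerTangent β μ t u' c' := by
  have hcard : Fintype.card (Fin d) = Module.finrank ℝ (Fin (d - 1) → ℝ) + 1 := by
    simp only [Fintype.card_fin, Module.finrank_fin_fun]; omega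
  obtain ⟨ℓ, hℓ, hℓf⟩ := f.exists_affineMap_ne_zero_of_finrank_lt
    ((hstab ⟨0, by omega⟩).mono Set.inter_subset_left)
    (by rw [Module.finrank_fin_fun]; omega)
  obtain ⟨g, hg⟩ : ∃ g : (Fin (d - 1) → ℝ) →ᵃ[ℝ] ℝ, ∀ i, g (β i) = min (ℓ (β i)) 0 :=
    (AffineBasis.mk β (affineIndependent_of_affineSpan_eq_top hcard hspan)
      hspan).exists_affineMap_apply_eq _
  obtain ⟨u, c, hu⟩ := g.exists_dotProduct_add_eq
  obtain ⟨u', c', hu'⟩ := (g - ℓ).exists_dotProduct_add_eq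
  have hβ : ∀ i, max (g (β i)) ((g - ℓ) (β i)) = 0 := fun i => by
    rw [AffineMap.coe_sub, Pi.sub_apply, hg i]
    rcases le_total (ℓ (β i)) 0 with h | h <;> simp [h]
  have hsep : ∀ i, ¬(g (β i) < (g - ℓ) (β i) ∧ g (μ i) < (g - ℓ) (μ i)) ∧
      ¬((g - ℓ) (β i) < g (β i) ∧ (g - ℓ) (μ i) < g (μ i)) := fun i => by
    obtain ⟨x, hxf, hx⟩ := hstab i
    have hgx : g x = (g - ℓ) x := by simp [hℓf x hxf]
    exact ⟨AffineMap.not_lt_and_lt_of_mem_segment_of_eq _ _ hx hgx,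
      AffineMap.not_lt_and_lt_of_mem_segment_of_eq _ _ hx hgx.symm⟩
  refine ⟨fun i => max (g (μ i)) ((g - ℓ) (μ i)), u, u', c, c', fun h => hℓ ?_,
    colorfulLowerTangent_of_max_eq _ _ hu hβ (fun _ => rfl) fun i => (hsep i).1,
    colorfulLowerTangent_of_max_eq _ _ hu' (fun i => (max_comm _ _).trans (hβ i))
      (fun _ => max_comm _ _) fun i => (hsep i).2⟩
  obtain ⟨rfl, rfl⟩ := Prod.ext_iff.mp h
  ext y
  simpa [hu] using hu' y
end
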